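/- arXiv:2602.01372 — 12 statements merged into one kernel-verified Lean document; each statement's English description precedes it below -/
import Mathlib

section
/- Per-step ascent for the dual blocks: let (u^{(k)}) be the dual block-ascent iterates, x^{(k)} := x(u^{(k)}), x^{(k+1/2)} := x(u_1^{(k+1)}, u_2^{(k)}), and r^{(k)} := A x^{(k)} - b. Assume sup_k ||x^{(k)}||_1 <= X (including half-step iterates). Then for every k >= 0: F_gamma(u_1^{(k+1)}, u_2^{(k)}) - F_gamma(u_1^{(k)}, u_2^{(k)}) >= gamma * ||r_1^{(k)}||_1^2 / (2*X*||A||_{1->1}^2), and F_gamma(u_1^{(k+1)}, u_2^{(k+1)}) - F_gamma(u_1^{(k+1)}, u_2^{(k)}) >= gamma * ||r_2^{(k+1/2)}||_1^2 / (2*X*||A||_{1->1}^2), where r^{(k+1/2)} := A x^{(k+1/2)} - b. -/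
/-!
STATEMENT 2: Per-step ascent for the dual blocks: each exact block maximization
increases the dual objective by at least `γ ‖r‖₁² / (2 X ‖A‖²_{1→1})`, where `r`
is the corresponding block residual.
-/

noncomputable section

open Real

section AuxLemmas

/-- Key: `2(r-1)/(r+1) ≤ log r` for `r ≥ 1`. -/
lemma key1 : ∀ r : ℝ, 1 ≤ r → 2*(r-1)/(r+1) ≤ Real.log r := by
  intro r hr
  set g : ℝ → ℝ := fun x => Real.log x - 2*(x-1)/(x+1) with hg
  have hderiv : ∀ x : ℝ, 0 < x → HasDerivAt g (1/x - 4/(x+1)^2) x := by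
    intro x hx
    have h1 : HasDerivAt Real.log (1/x) x := by
      simpa [one_div] using Real.hasDerivAt_log (ne_of_gt hx)
    have h2 : HasDerivAt (fun x : ℝ => 2*(x-1)/(x+1))
        ((2*((x+1)) - 2*(x-1)*1)/((x+1)^2)) x := by
      have hn : HasDerivAt (fun x : ℝ => 2*(x-1)) 2 x := by
        simpa using ((hasDerivAt_id x).sub_const 1).const_mul 2
      have hd : HasDerivAt (fun x : ℝ => x+1) 1 x := (hasDerivAt_id x).add_const 1
      have hne : x + 1 ≠ 0 := by linarith
      exact hn.div hd hne
    have := h1.sub h2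
    have e4 : (2*(x+1) - 2*(x-1)*1) = 4 := by ring
    rw [e4] at this
    exact this
  have hmono : MonotoneOn g (Set.Ici (1:ℝ)) := by
    apply monotoneOn_of_deriv_nonneg (convex_Ici 1)
    · apply ContinuousOn.sub
      · intro x hx
        exact (Real.continuousAt_log (by simp at hx; linarith)).continuousWithinAt
      · apply ContinuousOn.div
        · fun_prop
        · fun_prop
        · intro x hx; simp at hx; intro h; linarith
    · intro x hx
      simp at hx
      exact ((hderiv x (by linarith)).differentiableAt).differentiableWithinAt
    · intro x hx
      simp at hx
      rw [(hderiv x (by linarith)).deriv]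
      rw [sub_nonneg, div_le_div_iff₀ (by positivity) (by linarith)]
      nlinarith
  have h0 : g 1 ≤ g r := hmono (by simp) (by simpa using hr) hr
  simp [hg] at h0
  linarith

/-- Key: `log r ≤ 2(r-1)/(r+1)` for `0 < r ≤ 1`. -/
lemma key2 : ∀ r : ℝ, 0 < r → r ≤ 1 → Real.log r ≤ 2*(r-1)/(r+1) := by
  intro r hr hr1
  have h := key1 (1/r) (by rw [le_div_iff₀ hr]; linarith)
  rw [Real.log_div one_ne_zero (ne_of_gt hr), Real.log_one] at h
  have e : 2*(1/r-1)/(1/r+1) = -(2*(r-1)/(r+1)) := by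
    have hne : r + 1 ≠ 0 := by linarith
    field_simp
    ring
  rw [e] at h
  linarith

/-- Pointwise Pinsker-type bound. -/
lemma pointwise : ∀ r : ℝ, 0 < r → 3*(r-1)^2/(2*(r+2)) ≤ r * Real.log r - r + 1 := by
  have hderiv : ∀ x : ℝ, 0 < x →
      HasDerivAt (fun y : ℝ => y * Real.log y - y + 1 - 3*(y-1)^2/(2*(y+2)))
        (Real.log x - 3*(x-1)*(x+5)/(2*(x+2)^2)) x := by
    intro x hx
    have h1 : HasDerivAt (fun y : ℝ => y * Real.log y) (Real.log x + 1) x :=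
      Real.hasDerivAt_mul_log (ne_of_gt hx)
    have hn : HasDerivAt (fun y : ℝ => 3*(y-1)^2) (3*(2*(x-1))) x := by
      simpa using (((hasDerivAt_id x).sub_const 1).pow 2).const_mul 3
    have hd : HasDerivAt (fun y : ℝ => 2*(y+2)) 2 x := by
      simpa using ((hasDerivAt_id x).add_const 2).const_mul 2
    have hne : 2*(x+2) ≠ 0 := by positivity
    have h2 : HasDerivAt (fun y : ℝ => 3*(y-1)^2/(2*(y+2)))
        ((3*(2*(x-1))*(2*(x+2)) - 3*(x-1)^2*2)/(2*(x+2))^2) x := hn.div hd hne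
    have h3 := ((h1.sub_const x).add_const 1).sub h2
    · have e : (Real.log x + 1) = Real.log x + 1 := rfl
      refine (((h1.sub (hasDerivAt_id x)).add_const 1).sub h2).congr_deriv ?_
      have hne2 : (x+2) ≠ 0 := by positivity
      field_simp
      ring
  have cont : ∀ s : Set ℝ, (∀ x ∈ s, (0:ℝ) < x) →
      ContinuousOn (fun y : ℝ => y * Real.log y - y + 1 - 3*(y-1)^2/(2*(y+2))) s := by
    intro s hs
    intro x hx
    exact ((hderiv x (hs x hx)).continuousAt).continuousWithinAt
  intro r hr
  rcases le_total 1 r with h1r | h1r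
  · have hmono : MonotoneOn (fun y : ℝ => y * Real.log y - y + 1 - 3*(y-1)^2/(2*(y+2)))
        (Set.Icc (1:ℝ) r) := by
      apply monotoneOn_of_deriv_nonneg (convex_Icc 1 r)
      · exact cont _ (fun x hx => by simp at hx; linarith [hx.1])
      · intro x hx
        rw [interior_Icc] at hx
        exact ((hderiv x (by linarith [hx.1])).differentiableAt).differentiableWithinAt
      · intro x hx
        rw [interior_Icc] at hx
        obtain ⟨hx1, hx2⟩ := hx
        rw [(hderiv x (by linarith)).deriv, sub_nonneg]
        calc 3*(x-1)*(x+5)/(2*(x+2)^2) ≤ 2*(x-1)/(x+1) := by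
              rw [div_le_div_iff₀ (by positivity) (by positivity)]
              nlinarith [sq_nonneg (x-1), hx1]
          _ ≤ Real.log x := key1 x hx1.le
    have h0 := hmono (Set.left_mem_Icc.2 h1r) (Set.right_mem_Icc.2 h1r) h1r
    simp at h0
    linarith
  · have hanti : AntitoneOn (fun y : ℝ => y * Real.log y - y + 1 - 3*(y-1)^2/(2*(y+2)))
        (Set.Icc r 1) := by
      apply antitoneOn_of_deriv_nonpos (convex_Icc r 1)
      · exact cont _ (fun x hx => by simp at hx; linarith [hx.1])
      · intro x hx
        rw [interior_Icc] at hx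
        exact ((hderiv x (by linarith [hx.1])).differentiableAt).differentiableWithinAt
      · intro x hx
        rw [interior_Icc] at hx
        obtain ⟨hx1, hx2⟩ := hx
        have hx0 : 0 < x := lt_trans hr hx1
        rw [(hderiv x hx0).deriv, sub_nonpos]
        calc Real.log x ≤ 2*(x-1)/(x+1) := key2 x hx0 hx2.le
          _ ≤ 3*(x-1)*(x+5)/(2*(x+2)^2) := by
              rw [div_le_div_iff₀ (by positivity) (by positivity)]
              nlinarith [sq_nonneg (x-1), hx2]
    have h0 := hanti (Set.left_mem_Icc.2 h1r) (Set.right_mem_Icc.2 h1r) h1r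
    simp at h0
    linarith

/-- Pointwise generalized-KL lower bound. -/
lemma pointwise_pq (p q : ℝ) (hp : 0 < p) (hq : 0 < q) :
    3*(p-q)^2/(2*(p+2*q)) ≤ p * Real.log (p/q) - p + q := by
  have h := pointwise (p/q) (by positivity)
  have hmul := mul_le_mul_of_nonneg_left h hq.le
  have e1 : q * (3*(p/q-1)^2/(2*(p/q+2))) = 3*(p-q)^2/(2*(p+2*q)) := by
    rw [div_add' _ _ _ (ne_of_gt hq), div_sub' (ne_of_gt hq)]
    rw [div_pow]
    field_simp
  have e2 : q * ((p/q) * Real.log (p/q) - p/q + 1) = p * Real.log (p/q) - p + q := by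
    field_simp
  rw [e1, e2] at hmul
  exact hmul

/-- Generalized Pinsker inequality for positive vectors. -/
lemma pinsker {d : ℕ} (p q : Fin d → ℝ) (hp : ∀ i, 0 < p i) (hq : ∀ i, 0 < q i)
    (X : ℝ) (hP : (∑ i, |p i|) ≤ X) (hQ : (∑ i, |q i|) ≤ X) :
    (∑ i, |p i - q i|) ^ 2 / (2 * X) ≤ ∑ i, (p i * Real.log (p i / q i) - p i + q i) := by
  rcases isEmpty_or_nonempty (Fin d) with hd | hd
  · simp
  · -- denominators
    have hg : ∀ i : Fin d, (0:ℝ) < 2*(p i + 2*q i)/3 := fun i => by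
      have := hp i; have := hq i; positivity
    have hsed := Finset.sq_sum_div_le_sum_sq_div Finset.univ (fun i => |p i - q i|)
      (fun i _ => hg i)
    have hsum_pos : 0 < ∑ i, 2*(p i + 2*q i)/3 :=
      Finset.sum_pos (fun i _ => hg i) Finset.univ_nonempty
    have hsum_le : (∑ i, 2*(p i + 2*q i)/3) ≤ 2 * X := by
      have e : (∑ i, 2*(p i + 2*q i)/3) = (2/3) * (∑ i, |p i|) + (4/3) * (∑ i, |q i|) := by
        rw [Finset.mul_sum, Finset.mul_sum, ← Finset.sum_add_distrib]
        apply Finset.sum_congr rfl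
        intro i _
        rw [abs_of_pos (hp i), abs_of_pos (hq i)]
        ring
      rw [e]
      linarith [Finset.sum_nonneg (fun i (_ : i ∈ Finset.univ) => abs_nonneg (p i)),
        Finset.sum_nonneg (fun i (_ : i ∈ Finset.univ) => abs_nonneg (q i))]
    have hpoint : ∑ i, (|p i - q i|)^2 / (2*(p i + 2*q i)/3)
        ≤ ∑ i, (p i * Real.log (p i / q i) - p i + q i) := by
      apply Finset.sum_le_sum
      intro i _
      have := pointwise_pq (p i) (q i) (hp i) (hq i)
      calc (|p i - q i|)^2 / (2*(p i + 2*q i)/3) = 3*(p i - q i)^2/(2*(p i + 2*q i)) := by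
            rw [sq_abs, div_div_eq_mul_div]; ring
        _ ≤ _ := this
    calc (∑ i, |p i - q i|) ^ 2 / (2 * X)
        ≤ (∑ i, |p i - q i|) ^ 2 / (∑ i, 2*(p i + 2*q i)/3) := by
          apply div_le_div_of_nonneg_left (sq_nonneg _) hsum_pos hsum_le
      _ ≤ ∑ i, (|p i - q i|)^2 / (2*(p i + 2*q i)/3) := hsed
      _ ≤ _ := hpoint

/-- First-order condition at an exact block maximizer. -/
lemma foc {m d : ℕ} (A : Matrix (Fin m) (Fin d) ℝ) (b : Fin m → ℝ)
    (z c : Fin d → ℝ) (K γ : ℝ) (hγ : 0 < γ)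
    (G : (Fin m → ℝ) → ℝ)
    (hG : ∀ u, G u = (∑ j, b j * u j) + K
      - γ * ∑ i, z i * Real.exp ((∑ l, u l * A l i + c i)/γ))
    (us : Fin m → ℝ) (hmax : ∀ w, G w ≤ G us) :
    ∀ j, (∑ i, A j i * (z i * Real.exp ((∑ l, us l * A l i + c i)/γ))) = b j := by
  intro j
  set S : Fin d → ℝ := fun i => ∑ l, us l * A l i with hS
  set φ : ℝ → ℝ := fun t =>
    ((∑ l, b l * us l) + t * b j + K)
      - γ * ∑ i, z i * Real.exp ((S i + t * A j i + c i)/γ) with hφ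
  have hφeq : ∀ t, φ t = G (fun l => us l + t * (if l = j then 1 else 0)) := by
    intro t
    rw [hG]
    simp only [hφ]
    congr 1
    · have e1 : ∀ l, b l * (us l + t * (if l = j then 1 else 0))
          = b l * us l + t * (if l = j then b l else 0) := by
        intro l; by_cases h : l = j <;> simp [h] <;> ring
      rw [Finset.sum_congr rfl (fun l _ => e1 l), Finset.sum_add_distrib,
        ← Finset.mul_sum, Finset.sum_ite_eq' Finset.univ j b]
      simp
    · congr 1
      apply Finset.sum_congr rfl
      intro i _
      congr 2
      have e2 : ∀ l, (us l + t * (if l = j then 1 else 0)) * A l i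
          = us l * A l i + t * (if l = j then A l i else 0) := by
        intro l; by_cases h : l = j <;> simp [h] <;> ring
      rw [Finset.sum_congr rfl (fun l _ => e2 l), Finset.sum_add_distrib,
        ← Finset.mul_sum, Finset.sum_ite_eq' Finset.univ j (fun l => A l i)]
      simp [hS]
  have hlocmax : IsLocalMax φ 0 := by
    apply Filter.Eventually.of_forall
    intro t
    rw [hφeq t, hφeq 0]
    have : (fun l => us l + (0:ℝ) * (if l = j then 1 else 0)) = us := by
      funext l; simp
    rw [this]
    exact hmax _
  have hder : HasDerivAt φ
      (b j - γ * ∑ i, z i * (A j i / γ * Real.exp ((S i + 0 * A j i + c i)/γ))) 0 := by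
    apply HasDerivAt.sub
    · have h1 : HasDerivAt (fun t : ℝ => t * b j) (b j) 0 := hasDerivAt_mul_const (b j)
      simpa using (h1.const_add ((∑ l, b l * us l))).add_const K
    · apply HasDerivAt.const_mul
      apply HasDerivAt.fun_sum
      intro i _
      have h2 : HasDerivAt (fun t : ℝ => (S i + t * A j i + c i)/γ) (A j i / γ) 0 := by
        exact ((((hasDerivAt_mul_const (A j i)).const_add (S i)).add_const (c i)).div_const γ)
      simpa [mul_comm] using (h2.exp.const_mul (z i))
  have hzero := hlocmax.hasDerivAt_eq_zero hder
  have e3 : γ * ∑ i, z i * (A j i / γ * Real.exp ((S i + 0 * A j i + c i)/γ))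
      = ∑ i, A j i * (z i * Real.exp ((S i + c i)/γ)) := by
    rw [Finset.mul_sum]
    apply Finset.sum_congr rfl
    intro i _
    have : (S i + 0 * A j i + c i) = S i + c i := by ring
    rw [this]
    field_simp
  rw [e3] at hzero
  linarith [hzero]

/-- Exact ascent formula: the block improvement equals `γ` times a generalized KL divergence. -/
lemma ascent_eq {m d : ℕ} (A : Matrix (Fin m) (Fin d) ℝ) (b : Fin m → ℝ)
    (z c : Fin d → ℝ) (K γ : ℝ) (hγ : 0 < γ) (hz : ∀ i, 0 < z i)
    (G : (Fin m → ℝ) → ℝ)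
    (hG : ∀ u, G u = (∑ j, b j * u j) + K
      - γ * ∑ i, z i * Real.exp ((∑ l, u l * A l i + c i)/γ))
    (u us : Fin m → ℝ)
    (hfoc : ∀ j, (∑ i, A j i * (z i * Real.exp ((∑ l, us l * A l i + c i)/γ))) = b j) :
    G us - G u = γ * ∑ i,
      ((z i * Real.exp ((∑ l, us l * A l i + c i)/γ))
          * Real.log ((z i * Real.exp ((∑ l, us l * A l i + c i)/γ))
              / (z i * Real.exp ((∑ l, u l * A l i + c i)/γ)))
        - (z i * Real.exp ((∑ l, us l * A l i + c i)/γ))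
        + (z i * Real.exp ((∑ l, u l * A l i + c i)/γ))) := by
  set xs : Fin d → ℝ := fun i => z i * Real.exp ((∑ l, us l * A l i + c i)/γ) with hxs
  set x : Fin d → ℝ := fun i => z i * Real.exp ((∑ l, u l * A l i + c i)/γ) with hx
  have hlog : ∀ i, Real.log (xs i / x i) = ((∑ l, us l * A l i) - (∑ l, u l * A l i))/γ := by
    intro i
    rw [hxs, hx]
    rw [mul_div_mul_left _ _ (ne_of_gt (hz i))]
    rw [← Real.exp_sub, Real.log_exp]
    ring
  -- γ * ∑ xs i * log (xs i / x i) = ∑_l (us l - u l) * b l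
  have hkey : γ * (∑ i, xs i * Real.log (xs i / x i)) = ∑ l, b l * us l - ∑ l, b l * u l := by
    have e1 : ∀ i, γ * (xs i * Real.log (xs i / x i))
        = ∑ l, (us l - u l) * (A l i * xs i) := by
      intro i
      rw [hlog i]
      rw [Finset.sum_congr rfl (fun l (_ : l ∈ Finset.univ) => by
        rw [sub_mul] : ∀ l ∈ Finset.univ, (us l - u l) * (A l i * xs i)
          = us l * (A l i * xs i) - u l * (A l i * xs i))]
      rw [Finset.sum_sub_distrib]
      have c1 : ∀ (v : Fin m → ℝ), ∑ l, v l * (A l i * xs i) = (∑ l, v l * A l i) * xs i := by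
        intro v
        rw [Finset.sum_mul]
        apply Finset.sum_congr rfl
        intro l _
        ring
      rw [c1 us, c1 u]
      field_simp
    rw [Finset.mul_sum, Finset.sum_congr rfl (fun i _ => e1 i), Finset.sum_comm]
    rw [← Finset.sum_sub_distrib]
    apply Finset.sum_congr rfl
    intro l _
    rw [← Finset.mul_sum]
    have : (∑ i, A l i * xs i) = b l := hfoc l
    rw [this]
    ring
  have hGu := hG u
  have hGus := hG us
  have exs : ∀ i, z i * Real.exp ((∑ l, us l * A l i + c i)/γ) = xs i := fun i => rfl
  have ex : ∀ i, z i * Real.exp ((∑ l, u l * A l i + c i)/γ) = x i := fun i => rfl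
  rw [Finset.sum_congr rfl (fun i _ => exs i)] at hGus
  rw [Finset.sum_congr rfl (fun i _ => ex i)] at hGu
  have expand : ∑ i, (xs i * Real.log (xs i / x i) - xs i + x i)
      = (∑ i, xs i * Real.log (xs i / x i)) - (∑ i, xs i) + (∑ i, x i) := by
    rw [Finset.sum_add_distrib, Finset.sum_sub_distrib]
  rw [hGus, hGu, expand, mul_add, mul_sub, hkey]
  ring

/-- Generic per-block ascent bound. -/
lemma block_bound {m d : ℕ} (A : Matrix (Fin m) (Fin d) ℝ) (b : Fin m → ℝ)
    (z c : Fin d → ℝ) (K γ X M : ℝ) (hγ : 0 < γ) (hz : ∀ i, 0 < z i)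
    (G : (Fin m → ℝ) → ℝ)
    (hG : ∀ u, G u = (∑ j, b j * u j) + K
      - γ * ∑ i, z i * Real.exp ((∑ l, u l * A l i + c i)/γ))
    (u us : Fin m → ℝ) (hmax : ∀ w, G w ≤ G us)
    (hM : ∀ i, (∑ j, |A j i|) ≤ M) (hM0 : 0 ≤ M)
    (hXu : (∑ i, |z i * Real.exp ((∑ l, u l * A l i + c i)/γ)|) ≤ X)
    (hXus : (∑ i, |z i * Real.exp ((∑ l, us l * A l i + c i)/γ)|) ≤ X) :
    γ * (∑ j, |(∑ i, A j i * (z i * Real.exp ((∑ l, u l * A l i + c i)/γ))) - b j|) ^ 2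
        / (2 * X * M ^ 2)
      ≤ G us - G u := by
  set xs : Fin d → ℝ := fun i => z i * Real.exp ((∑ l, us l * A l i + c i)/γ) with hxs
  set x : Fin d → ℝ := fun i => z i * Real.exp ((∑ l, u l * A l i + c i)/γ) with hx
  have hxpos : ∀ i, 0 < x i := fun i => by
    have := hz i; positivity
  have hxspos : ∀ i, 0 < xs i := fun i => by
    have := hz i; positivity
  have hfoc := foc A b z c K γ hγ G hG us hmax
  have hEq := ascent_eq A b z c K γ hγ hz G hG u us hfoc
  have hΔnonneg : 0 ≤ G us - G u := by linarith [hmax u]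
  have hX0 : 0 ≤ X := le_trans (Finset.sum_nonneg (fun i _ => abs_nonneg _)) hXu
  -- residual bound : ∑_j |r j| ≤ M * ∑_i |xs i - x i|
  have hres : (∑ j, |(∑ i, A j i * x i) - b j|) ≤ M * (∑ i, |xs i - x i|) := by
    have e1 : ∀ j, (∑ i, A j i * x i) - b j = ∑ i, A j i * (x i - xs i) := by
      intro j
      rw [← hfoc j, ← Finset.sum_sub_distrib]
      apply Finset.sum_congr rfl
      intro i _
      ring
    calc (∑ j, |(∑ i, A j i * x i) - b j|) = ∑ j, |∑ i, A j i * (x i - xs i)| := by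
          apply Finset.sum_congr rfl; intro j _; rw [e1 j]
      _ ≤ ∑ j, ∑ i, |A j i| * |x i - xs i| := by
          apply Finset.sum_le_sum
          intro j _
          calc |∑ i, A j i * (x i - xs i)| ≤ ∑ i, |A j i * (x i - xs i)| :=
                Finset.abs_sum_le_sum_abs _ _
            _ = ∑ i, |A j i| * |x i - xs i| := by
                apply Finset.sum_congr rfl; intro i _; rw [abs_mul]
      _ = ∑ i, (∑ j, |A j i|) * |x i - xs i| := by
          rw [Finset.sum_comm]
          apply Finset.sum_congr rfl
          intro i _
          rw [Finset.sum_mul]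
      _ ≤ ∑ i, M * |x i - xs i| := by
          apply Finset.sum_le_sum
          intro i _
          exact mul_le_mul_of_nonneg_right (hM i) (abs_nonneg _)
      _ = M * (∑ i, |xs i - x i|) := by
          rw [Finset.mul_sum]
          apply Finset.sum_congr rfl
          intro i _
          rw [abs_sub_comm]
  have hpinsker := pinsker xs x hxspos hxpos X hXus hXu
  show γ * (∑ j, |(∑ i, A j i * x i) - b j|) ^ 2 / (2 * X * M ^ 2) ≤ G us - G u
  have hr0 : 0 ≤ ∑ j, |(∑ i, A j i * x i) - b j| :=
    Finset.sum_nonneg (fun j _ => abs_nonneg _)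
  rcases le_or_gt (2 * X * M ^ 2) 0 with hdenom | hdenom
  · have h1 : γ * (∑ j, |(∑ i, A j i * x i) - b j|) ^ 2 / (2 * X * M ^ 2) ≤ 0 := by
      apply div_nonpos_of_nonneg_of_nonpos _ hdenom
      positivity
    linarith
  · have hXpos : 0 < X := by nlinarith [sq_nonneg M]
    have hM2 : (0:ℝ) < M ^ 2 := by nlinarith
    have hMpos : 0 < M := lt_of_le_of_ne hM0 (by
      intro h
      rw [← h] at hM2
      simp at hM2)
    have hT0 : 0 ≤ ∑ i, |xs i - x i| := Finset.sum_nonneg (fun i _ => abs_nonneg _)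
    have hsq : (∑ j, |(∑ i, A j i * x i) - b j|) ^ 2 ≤ (M * (∑ i, |xs i - x i|)) ^ 2 :=
      pow_le_pow_left₀ hr0 hres 2
    calc γ * (∑ j, |(∑ i, A j i * x i) - b j|) ^ 2 / (2 * X * M ^ 2)
        ≤ γ * (M * (∑ i, |xs i - x i|)) ^ 2 / (2 * X * M ^ 2) := by
          apply div_le_div_of_nonneg_right ?_ hdenom.le
          exact mul_le_mul_of_nonneg_left hsq hγ.le
      _ = γ * ((∑ i, |xs i - x i|) ^ 2 / (2 * X)) := by
          field_simp
      _ ≤ γ * ∑ i, (xs i * Real.log (xs i / x i) - xs i + x i) :=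
          mul_le_mul_of_nonneg_left hpinsker hγ.le
      _ = G us - G u := hEq.symm

end AuxLemmas

theorem per_step_ascent
    {d m1 m2 : ℕ}
    (A1 : Matrix (Fin m1) (Fin d) ℝ) (A2 : Matrix (Fin m2) (Fin d) ℝ)
    (b1 : Fin m1 → ℝ) (b2 : Fin m2 → ℝ) (C z : Fin d → ℝ) (γ : ℝ)
    (hz : ∀ i, 0 < z i) (hγ : 0 < γ)
    -- b ∈ range(A)
    (hrange : ∃ x : Fin d → ℝ, A1.mulVec x = b1 ∧ A2.mulVec x = b2)
    -- dual objective
    (F : (Fin m1 → ℝ) → (Fin m2 → ℝ) → ℝ)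
    (hF : ∀ u1 u2, F u1 u2
        = (∑ i, b1 i * u1 i) + (∑ i, b2 i * u2 i) + γ * (∑ i, z i)
          - γ * ∑ i, z i * Real.exp
              (((∑ j, u1 j * A1 j i) + (∑ j, u2 j * A2 j i) - C i) / γ))
    -- primal map x(u)
    (xOf : (Fin m1 → ℝ) → (Fin m2 → ℝ) → Fin d → ℝ)
    (hxOf : ∀ u1 u2 i, xOf u1 u2 i
        = z i * Real.exp (((∑ j, u1 j * A1 j i) + (∑ j, u2 j * A2 j i) - C i) / γ))
    -- ‖A‖_{1→1}
    (ANorm : ℝ)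
    (hANorm : ANorm = ⨆ i : Fin d, ((∑ j, |A1 j i|) + (∑ j, |A2 j i|)))
    -- block ascent iterates
    (u1seq : ℕ → Fin m1 → ℝ) (u2seq : ℕ → Fin m2 → ℝ)
    (hstep1 : ∀ k, ∀ w, F w (u2seq k) ≤ F (u1seq (k + 1)) (u2seq k))
    (hstep2 : ∀ k, ∀ w, F (u1seq (k + 1)) w ≤ F (u1seq (k + 1)) (u2seq (k + 1)))
    -- uniform ℓ¹ bound on primal iterates, including half-step iterates
    (X : ℝ)
    (hX : ∀ k, (∑ i, |xOf (u1seq k) (u2seq k) i|) ≤ X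
        ∧ (∑ i, |xOf (u1seq (k + 1)) (u2seq k) i|) ≤ X) :
    ∀ k : ℕ,
      γ * (∑ i, |A1.mulVec (xOf (u1seq k) (u2seq k)) i - b1 i|) ^ 2
          / (2 * X * ANorm ^ 2)
        ≤ F (u1seq (k + 1)) (u2seq k) - F (u1seq k) (u2seq k)
      ∧
      γ * (∑ i, |A2.mulVec (xOf (u1seq (k + 1)) (u2seq k)) i - b2 i|) ^ 2
          / (2 * X * ANorm ^ 2)
        ≤ F (u1seq (k + 1)) (u2seq (k + 1)) - F (u1seq (k + 1)) (u2seq k) := by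
  -- facts about ANorm
  have hbdd : BddAbove (Set.range fun i : Fin d => ((∑ j, |A1 j i|) + (∑ j, |A2 j i|))) :=
    Set.Finite.bddAbove (Set.finite_range _)
  have hM1 : ∀ i : Fin d, (∑ j, |A1 j i|) ≤ ANorm := by
    intro i
    rw [hANorm]
    have h := le_ciSup hbdd i
    have h2 : (0:ℝ) ≤ ∑ j, |A2 j i| := Finset.sum_nonneg (fun j _ => abs_nonneg _)
    linarith
  have hM2 : ∀ i : Fin d, (∑ j, |A2 j i|) ≤ ANorm := by
    intro i
    rw [hANorm]
    have h := le_ciSup hbdd i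
    have h2 : (0:ℝ) ≤ ∑ j, |A1 j i| := Finset.sum_nonneg (fun j _ => abs_nonneg _)
    linarith
  have hM0 : 0 ≤ ANorm := by
    rcases isEmpty_or_nonempty (Fin d) with hd | hd
    · rw [hANorm, Real.iSup_of_isEmpty]
    · obtain ⟨i⟩ := hd
      refine le_trans ?_ (hM1 i)
      exact Finset.sum_nonneg (fun j _ => abs_nonneg _)
  intro k
  constructor
  · -- block 1
    have hb := block_bound A1 b1 z
      (fun i => (∑ j, u2seq k j * A2 j i) - C i)
      ((∑ i, b2 i * u2seq k i) + γ * (∑ i, z i)) γ X ANorm hγ hz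
      (fun w => F w (u2seq k))
      (by
        intro u
        show F u (u2seq k) = _
        rw [hF]
        beta_reduce
        have e : (∑ i, z i * Real.exp
              (((∑ j, u j * A1 j i) + (∑ j, u2seq k j * A2 j i) - C i) / γ))
            = ∑ i, z i * Real.exp ((((∑ l, u l * A1 l i)
                + ((∑ j, u2seq k j * A2 j i) - C i))) / γ) := by
          apply Finset.sum_congr rfl
          intro i _
          congr 2
          ring
        rw [e]
        ring)
      (u1seq k) (u1seq (k+1)) (hstep1 k) hM1 hM0
      (by
        have h := (hX k).1
        refine le_trans (le_of_eq ?_) h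
        beta_reduce
        apply Finset.sum_congr rfl
        intro i _
        rw [hxOf]
        congr 2
        ring)
      (by
        have h := (hX k).2
        refine le_trans (le_of_eq ?_) h
        beta_reduce
        apply Finset.sum_congr rfl
        intro i _
        rw [hxOf]
        congr 2
        ring)
    refine le_trans (le_of_eq ?_) hb
    beta_reduce
    have e : ∀ j : Fin m1, A1.mulVec (xOf (u1seq k) (u2seq k)) j
        = ∑ i, A1 j i * (z i * Real.exp (((∑ l, u1seq k l * A1 l i)
            + ((∑ j, u2seq k j * A2 j i) - C i)) / γ)) := by
      intro j
      rw [Matrix.mulVec, dotProduct]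
      apply Finset.sum_congr rfl
      intro i _
      rw [hxOf]
      congr 2
      ring
    rw [Finset.sum_congr rfl (fun j _ => by rw [e j])]
  · -- block 2
    have hb := block_bound A2 b2 z
      (fun i => (∑ j, u1seq (k+1) j * A1 j i) - C i)
      ((∑ i, b1 i * u1seq (k+1) i) + γ * (∑ i, z i)) γ X ANorm hγ hz
      (fun w => F (u1seq (k+1)) w)
      (by
        intro u
        show F (u1seq (k+1)) u = _
        rw [hF]
        beta_reduce
        have e : (∑ i, z i * Real.exp
              (((∑ j, u1seq (k+1) j * A1 j i) + (∑ j, u j * A2 j i) - C i) / γ))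
            = ∑ i, z i * Real.exp ((((∑ l, u l * A2 l i)
                + ((∑ j, u1seq (k+1) j * A1 j i) - C i))) / γ) := by
          apply Finset.sum_congr rfl
          intro i _
          congr 2
          ring
        rw [e]
        ring)
      (u2seq k) (u2seq (k+1)) (hstep2 k) hM2 hM0
      (by
        have h := (hX k).2
        refine le_trans (le_of_eq ?_) h
        beta_reduce
        apply Finset.sum_congr rfl
        intro i _
        rw [hxOf]
        congr 2
        ring)
      (by
        have h := (hX (k+1)).1
        refine le_trans (le_of_eq ?_) h
        beta_reduce
        apply Finset.sum_congr rfl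
        intro i _
        rw [hxOf]
        congr 2
        ring)
    refine le_trans (le_of_eq ?_) hb
    beta_reduce
    have e : ∀ j : Fin m2, A2.mulVec (xOf (u1seq (k+1)) (u2seq k)) j
        = ∑ i, A2 j i * (z i * Real.exp (((∑ l, u2seq k l * A2 l i)
            + ((∑ j, u1seq (k+1) j * A1 j i) - C i)) / γ)) := by
      intro j
      rw [Matrix.mulVec, dotProduct]
      apply Finset.sum_congr rfl
      intro i _
      rw [hxOf]
      congr 2
      ring
    rw [Finset.sum_congr rfl (fun j _ => by rw [e j])]
end
end

section
/- Dual gap versus global residual: let (u^{(k)}) be the dual block-ascent iterates, x^{(k)} := x(u^{(k)}) and r^{(k)} := A x^{(k)} - b. Assume sup_k ||u^{(k)}||_V <= U and that a dual maximizer u* of F_gamma with ||u*||_V <= U exists, and that at the beginning of each sweep the second block residual vanishes: r_2^{(k)} = 0 (i.e., A_2 x^{(k)} = b_2). Then for every k >= 0, the dual gap Delta_k := F_gamma(u*) - F_gamma(u^{(k)}) satisfies Delta_k <= 2*U*||r_1^{(k)}||_1. -/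
/-!
STATEMENT 3: Dual gap versus global residual: under a uniform block-quotient
dual bound `U` (for the iterates and a dual maximizer), and assuming the second
block residual vanishes at the beginning of each sweep, the dual gap satisfies
`Δ_k ≤ 2 U ‖r₁^{(k)}‖₁`.
-/

noncomputable section

open Real


lemma aux_exp_gap (γ : ℝ) (hγ : 0 < γ) (zi : ℝ) (hzi : 0 < zi) (a b : ℝ) :
    γ * (zi * Real.exp a) - γ * (zi * Real.exp b) ≤ zi * Real.exp a * (γ * a - γ * b) := by
  have h1 : b - a + 1 ≤ Real.exp (b - a) := Real.add_one_le_exp _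
  have h2 : Real.exp b = Real.exp a * Real.exp (b - a) := by rw [← Real.exp_add]; ring_nf
  have h5 := Real.exp_pos a
  nlinarith [mul_pos hγ (mul_pos hzi h5),
    mul_nonneg (le_of_lt (mul_pos hγ (mul_pos hzi h5))) (sub_nonneg.mpr h1)]

theorem dual_gap_vs_residual
    {d m1 m2 : ℕ}
    (A1 : Matrix (Fin m1) (Fin d) ℝ) (A2 : Matrix (Fin m2) (Fin d) ℝ)
    (b1 : Fin m1 → ℝ) (b2 : Fin m2 → ℝ) (C z : Fin d → ℝ) (γ : ℝ)
    (hz : ∀ i, 0 < z i) (hγ : 0 < γ)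
    -- b ∈ range(A)
    (hrange : ∃ x : Fin d → ℝ, A1.mulVec x = b1 ∧ A2.mulVec x = b2)
    -- dual objective
    (F : (Fin m1 → ℝ) → (Fin m2 → ℝ) → ℝ)
    (hF : ∀ u1 u2, F u1 u2
        = (∑ i, b1 i * u1 i) + (∑ i, b2 i * u2 i) + γ * (∑ i, z i)
          - γ * ∑ i, z i * Real.exp
              (((∑ j, u1 j * A1 j i) + (∑ j, u2 j * A2 j i) - C i) / γ))
    -- primal map x(u)
    (xOf : (Fin m1 → ℝ) → (Fin m2 → ℝ) → Fin d → ℝ)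
    (hxOf : ∀ u1 u2 i, xOf u1 u2 i
        = z i * Real.exp (((∑ j, u1 j * A1 j i) + (∑ j, u2 j * A2 j i) - C i) / γ))
    -- block-quotient seminorms
    (V1 : (Fin m1 → ℝ) → ℝ)
    (hV1 : ∀ v, V1 v = sInf {r : ℝ | ∃ h1 : Fin m1 → ℝ, ∃ h2 : Fin m2 → ℝ,
        (∀ i, (∑ j, h1 j * A1 j i) + (∑ j, h2 j * A2 j i) = 0)
        ∧ r = ⨆ i, |v i + h1 i|})
    (V2 : (Fin m2 → ℝ) → ℝ)
    (hV2 : ∀ v, V2 v = sInf {r : ℝ | ∃ h1 : Fin m1 → ℝ, ∃ h2 : Fin m2 → ℝ,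
        (∀ i, (∑ j, h1 j * A1 j i) + (∑ j, h2 j * A2 j i) = 0)
        ∧ r = ⨆ i, |v i + h2 i|})
    -- block ascent iterates
    (u1seq : ℕ → Fin m1 → ℝ) (u2seq : ℕ → Fin m2 → ℝ)
    (hstep1 : ∀ k, ∀ w, F w (u2seq k) ≤ F (u1seq (k + 1)) (u2seq k))
    (hstep2 : ∀ k, ∀ w, F (u1seq (k + 1)) w ≤ F (u1seq (k + 1)) (u2seq (k + 1)))
    -- uniform dual bound, for iterates and a maximizer
    (U : ℝ)
    (hU : ∀ k, max (V1 (u1seq k)) (V2 (u2seq k)) ≤ U)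
    (ustar1 : Fin m1 → ℝ) (ustar2 : Fin m2 → ℝ)
    (hstar : ∀ w1 w2, F w1 w2 ≤ F ustar1 ustar2)
    (hstarU : max (V1 ustar1) (V2 ustar2) ≤ U)
    -- the second block residual vanishes: A₂ x^{(k)} = b₂
    (hres2 : ∀ k, A2.mulVec (xOf (u1seq k) (u2seq k)) = b2) :
    ∀ k : ℕ,
      F ustar1 ustar2 - F (u1seq k) (u2seq k)
        ≤ 2 * U * ∑ i, |A1.mulVec (xOf (u1seq k) (u2seq k)) i - b1 i| := by

  intro k
  obtain ⟨x0, hx01, hx02⟩ := hrange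
  set u1 : Fin m1 → ℝ := u1seq k with hu1
  set u2 : Fin m2 → ℝ := u2seq k with hu2
  set x : Fin d → ℝ := xOf u1 u2 with hxdef
  have hb2 : A2.mulVec x = b2 := hres2 k
  -- generic sum swap
  have swap : ∀ {n : ℕ} (M : Matrix (Fin n) (Fin d) ℝ) (w : Fin n → ℝ) (v : Fin d → ℝ),
      ∑ i, v i * (∑ j, w j * M j i) = ∑ j, w j * M.mulVec v j := by
    intro n M w v
    simp only [Matrix.mulVec, dotProduct, Finset.mul_sum]
    rw [Finset.sum_comm]
    exact Finset.sum_congr rfl fun j _ => Finset.sum_congr rfl fun i _ => by ring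
  -- Step A: concavity gradient inequality
  have stepA : F ustar1 ustar2 - F u1 u2
      ≤ ∑ j, (ustar1 j - u1 j) * (b1 j - A1.mulVec x j) := by
    have key : γ * (∑ i, z i * Real.exp (((∑ j, u1 j * A1 j i) + (∑ j, u2 j * A2 j i) - C i) / γ))
        - γ * (∑ i, z i * Real.exp (((∑ j, ustar1 j * A1 j i) + (∑ j, ustar2 j * A2 j i) - C i) / γ))
        ≤ ∑ i, (x i * (∑ j, (u1 j - ustar1 j) * A1 j i)
            + x i * (∑ j, (u2 j - ustar2 j) * A2 j i)) := by
      rw [Finset.mul_sum, Finset.mul_sum, ← Finset.sum_sub_distrib]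
      refine Finset.sum_le_sum fun i _ => ?_
      have hx : x i = z i * Real.exp (((∑ j, u1 j * A1 j i) + (∑ j, u2 j * A2 j i) - C i) / γ) :=
        hxOf u1 u2 i
      set S := (∑ j, u1 j * A1 j i) + (∑ j, u2 j * A2 j i) with hS
      set T := (∑ j, ustar1 j * A1 j i) + (∑ j, ustar2 j * A2 j i) with hT
      have hsplit : (∑ j, (u1 j - ustar1 j) * A1 j i) + (∑ j, (u2 j - ustar2 j) * A2 j i)
          = S - T := by
        simp only [sub_mul, Finset.sum_sub_distrib, hS, hT]; ring
      have h4a : γ * ((S - C i) / γ) = S - C i := mul_div_cancel₀ _ (ne_of_gt hγ)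
      have h4b : γ * ((T - C i) / γ) = T - C i := mul_div_cancel₀ _ (ne_of_gt hγ)
      calc γ * (z i * Real.exp ((S - C i) / γ)) - γ * (z i * Real.exp ((T - C i) / γ))
          ≤ z i * Real.exp ((S - C i) / γ) * (γ * ((S - C i) / γ) - γ * ((T - C i) / γ)) :=
            aux_exp_gap γ hγ (z i) (hz i) _ _
        _ = x i * (∑ j, (u1 j - ustar1 j) * A1 j i)
            + x i * (∑ j, (u2 j - ustar2 j) * A2 j i) := by
            rw [h4a, h4b, hx, ← mul_add, hsplit]; ring
    rw [Finset.sum_add_distrib, swap A1, swap A2] at key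
    have expand : F ustar1 ustar2 - F u1 u2
        = ((∑ j, b1 j * ustar1 j) - ∑ j, b1 j * u1 j)
          + ((∑ j, b2 j * ustar2 j) - ∑ j, b2 j * u2 j)
          + (γ * (∑ i, z i * Real.exp (((∑ j, u1 j * A1 j i) + (∑ j, u2 j * A2 j i) - C i) / γ))
             - γ * (∑ i, z i * Real.exp (((∑ j, ustar1 j * A1 j i) + (∑ j, ustar2 j * A2 j i) - C i) / γ))) := by
      rw [hF, hF]; ring
    have comb1 : ((∑ j, b1 j * ustar1 j) - ∑ j, b1 j * u1 j)
          + ∑ j, (u1 j - ustar1 j) * A1.mulVec x j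
        = ∑ j, (ustar1 j - u1 j) * (b1 j - A1.mulVec x j) := by
      rw [← Finset.sum_sub_distrib, ← Finset.sum_add_distrib]
      exact Finset.sum_congr rfl fun j _ => by ring
    have comb2 : ((∑ j, b2 j * ustar2 j) - ∑ j, b2 j * u2 j)
          + ∑ j, (u2 j - ustar2 j) * A2.mulVec x j = 0 := by
      rw [hb2, ← Finset.sum_sub_distrib, ← Finset.sum_add_distrib]
      exact Finset.sum_eq_zero fun j _ => by ring
    linarith [key, expand, comb1, comb2]
  -- Step B: kernel directions are orthogonal to the residual
  have stepB : ∀ (h1 : Fin m1 → ℝ) (h2 : Fin m2 → ℝ),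
      (∀ i, (∑ j, h1 j * A1 j i) + (∑ j, h2 j * A2 j i) = 0) →
      ∑ j, h1 j * (b1 j - A1.mulVec x j) = 0 := by
    intro h1 h2 hker
    have e1 : ∑ j, h1 j * (b1 j - A1.mulVec x j)
        = ∑ i, (x0 i - x i) * (∑ j, h1 j * A1 j i) := by
      have d1 : ∑ j, h1 j * (b1 j - A1.mulVec x j)
          = ∑ j, h1 j * A1.mulVec x0 j - ∑ j, h1 j * A1.mulVec x j := by
        rw [← Finset.sum_sub_distrib]
        exact Finset.sum_congr rfl fun j _ => by rw [← hx01]; ring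
      rw [d1, ← swap A1 h1 x0, ← swap A1 h1 x, ← Finset.sum_sub_distrib]
      exact Finset.sum_congr rfl fun i _ => by ring
    have e3 : ∑ i, (x0 i - x i) * (∑ j, h2 j * A2 j i) = 0 := by
      have d2 : ∑ i, (x0 i - x i) * (∑ j, h2 j * A2 j i)
          = ∑ j, h2 j * A2.mulVec x0 j - ∑ j, h2 j * A2.mulVec x j := by
        rw [← swap A2 h2 x0, ← swap A2 h2 x, ← Finset.sum_sub_distrib]
        exact Finset.sum_congr rfl fun i _ => by ring
      rw [d2, hx02, hb2, sub_self]
    have e2 : ∑ i, (x0 i - x i) * (∑ j, h1 j * A1 j i)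
        = - ∑ i, (x0 i - x i) * (∑ j, h2 j * A2 j i) := by
      rw [← Finset.sum_neg_distrib]
      refine Finset.sum_congr rfl fun i _ => ?_
      have hpq : (∑ j, h1 j * A1 j i) = -(∑ j, h2 j * A2 j i) := by linarith [hker i]
      rw [hpq]; ring
    rw [e1, e2, e3, neg_zero]
  set R := ∑ i, |A1.mulVec x i - b1 i| with hRdef
  have hR0 : 0 ≤ R := Finset.sum_nonneg fun j _ => abs_nonneg _
  -- near-optimal representatives in the quotient seminorm
  have getel : ∀ (v : Fin m1 → ℝ), V1 v ≤ U → ∀ δ : ℝ, 0 < δ →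
      ∃ (h1 : Fin m1 → ℝ) (h2 : Fin m2 → ℝ),
        (∀ i, (∑ j, h1 j * A1 j i) + (∑ j, h2 j * A2 j i) = 0)
        ∧ (⨆ i, |v i + h1 i|) < U + δ := by
    intro v hv δ hδ
    rw [hV1] at hv
    have hne : {r : ℝ | ∃ h1 : Fin m1 → ℝ, ∃ h2 : Fin m2 → ℝ,
        (∀ i, (∑ j, h1 j * A1 j i) + (∑ j, h2 j * A2 j i) = 0)
        ∧ r = ⨆ i, |v i + h1 i|}.Nonempty :=
      ⟨⨆ i, |v i + (0 : Fin m1 → ℝ) i|, (0 : Fin m1 → ℝ), (0 : Fin m2 → ℝ),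
        fun i => by simp, rfl⟩
    have hbd : BddBelow {r : ℝ | ∃ h1 : Fin m1 → ℝ, ∃ h2 : Fin m2 → ℝ,
        (∀ i, (∑ j, h1 j * A1 j i) + (∑ j, h2 j * A2 j i) = 0)
        ∧ r = ⨆ i, |v i + h1 i|} := by
      refine ⟨0, ?_⟩
      rintro r ⟨h1, h2, _, rfl⟩
      exact Real.iSup_nonneg fun i => abs_nonneg _
    obtain ⟨rr, ⟨h1, h2, hk, rfl⟩, hlt⟩ := (Real.sInf_le_iff hbd hne).mp hv δ hδ
    exact ⟨h1, h2, hk, hlt⟩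
  refine le_of_forall_pos_le_add fun ε hε => ?_
  have hδpos : 0 < ε / (2 * (R + 1)) := by positivity
  set δ := ε / (2 * (R + 1)) with hδdef
  have hU1 : V1 ustar1 ≤ U := le_trans (le_max_left _ _) hstarU
  have hU2 : V1 u1 ≤ U := le_trans (le_max_left _ _) (hU k)
  obtain ⟨h1, h2, hk1, hM1⟩ := getel ustar1 hU1 δ hδpos
  obtain ⟨g1, g2, hk2, hM2⟩ := getel u1 hU2 δ hδpos
  have stepC : F ustar1 ustar2 - F u1 u2
      ≤ ∑ j, ((ustar1 j + h1 j) - (u1 j + g1 j)) * (b1 j - A1.mulVec x j) := by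
    have id1 : ∑ j, ((ustar1 j + h1 j) - (u1 j + g1 j)) * (b1 j - A1.mulVec x j)
        = ((∑ j, (ustar1 j - u1 j) * (b1 j - A1.mulVec x j))
            + ∑ j, h1 j * (b1 j - A1.mulVec x j))
          - ∑ j, g1 j * (b1 j - A1.mulVec x j) := by
      rw [← Finset.sum_add_distrib, ← Finset.sum_sub_distrib]
      exact Finset.sum_congr rfl fun j _ => by ring
    rw [id1, stepB h1 h2 hk1, stepB g1 g2 hk2]
    simpa using stepA
  have stepD : ∑ j, ((ustar1 j + h1 j) - (u1 j + g1 j)) * (b1 j - A1.mulVec x j)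
      ≤ ((⨆ i, |ustar1 i + h1 i|) + ⨆ i, |u1 i + g1 i|) * R := by
    rw [hRdef, Finset.mul_sum]
    refine Finset.sum_le_sum fun j _ => ?_
    have hb1' : |ustar1 j + h1 j| ≤ ⨆ i, |ustar1 i + h1 i| :=
      le_ciSup (f := fun i => |ustar1 i + h1 i|) (Set.Finite.bddAbove (Set.finite_range _)) j
    have hb2' : |u1 j + g1 j| ≤ ⨆ i, |u1 i + g1 i| :=
      le_ciSup (f := fun i => |u1 i + g1 i|) (Set.Finite.bddAbove (Set.finite_range _)) j
    calc ((ustar1 j + h1 j) - (u1 j + g1 j)) * (b1 j - A1.mulVec x j)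
        ≤ |((ustar1 j + h1 j) - (u1 j + g1 j)) * (b1 j - A1.mulVec x j)| := le_abs_self _
      _ = |(ustar1 j + h1 j) - (u1 j + g1 j)| * |A1.mulVec x j - b1 j| := by
          rw [abs_mul, abs_sub_comm (b1 j)]
      _ ≤ ((⨆ i, |ustar1 i + h1 i|) + ⨆ i, |u1 i + g1 i|) * |A1.mulVec x j - b1 j| := by
          refine mul_le_mul_of_nonneg_right ?_ (abs_nonneg _)
          calc |(ustar1 j + h1 j) - (u1 j + g1 j)|
              ≤ |ustar1 j + h1 j| + |u1 j + g1 j| := abs_sub _ _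
            _ ≤ _ := add_le_add hb1' hb2'
  have hfinal : ((⨆ i, |ustar1 i + h1 i|) + ⨆ i, |u1 i + g1 i|) * R
      ≤ 2 * U * R + 2 * δ * R := by nlinarith [hM1, hM2, hR0]
  have hδR : 2 * δ * R ≤ ε := by
    have hpos : (0 : ℝ) < R + 1 := by linarith
    have heq : 2 * δ * R = ε * R / (R + 1) := by
      rw [hδdef]; field_simp
    rw [heq, div_le_iff₀ hpos]
    nlinarith [hε.le, hR0]
  linarith [stepC, stepD, hfinal, hδR]
end
end

section
/- Uniform V_1-bound for alternating maximization: assume the sweep map Psi := Psi_1 ∘ Psi_2 is non-expansive with respect to ||.||_{V_1}, i.e. ||Psi(a) - Psi(b)||_{V_1} <= ||a - b||_{V_1} for all a, b. Let u_1^{(k)} = Psi^k(u_1^{(0)}) be the iterates, let u_gamma = (u_{gamma,1}, u_{gamma,2}) be any maximizer of the dual problem with associated primal optimum x_gamma = x(u_gamma), assume ||log x_gamma - log z||_inf <= H, and let kappa be the decomposition constant of the split (A_1, A_2). Then for all k >= 0, ||u_1^{(k)}||_{V_1} <= ||u_1^{(0)}||_{V_1} + 2*kappa*(||C||_inf + gamma*H).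 -/
/-!
STATEMENT 7: Uniform V₁-bound for alternating maximization: if the sweep map
`Ψ = Ψ₁ ∘ Ψ₂` is non-expansive for `‖·‖_{V₁}`, then the iterates satisfy
`‖u₁^{(k)}‖_{V₁} ≤ ‖u₁^{(0)}‖_{V₁} + 2 κ (‖C‖_∞ + γ H)`.
-/

noncomputable section

open Real

private lemma supAbs_nonneg {n : ℕ} (v : Fin n → ℝ) : 0 ≤ ⨆ i, |v i| :=
  Real.iSup_nonneg fun _ => abs_nonneg _

private lemma abs_le_supAbs {n : ℕ} (v : Fin n → ℝ) (i : Fin n) : |v i| ≤ ⨆ j, |v j| :=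
  le_ciSup (f := fun j => |v j|) (Set.Finite.bddAbove (Set.finite_range _)) i

private lemma supAbs_le {n : ℕ} (v : Fin n → ℝ) {a : ℝ} (h0 : 0 ≤ a) (h : ∀ i, |v i| ≤ a) :
    (⨆ i, |v i|) ≤ a := Real.iSup_le h h0

private lemma supAbs_le_norm {n : ℕ} (v : Fin n → ℝ) : (⨆ i, |v i|) ≤ ‖v‖ :=
  supAbs_le v (norm_nonneg v) fun i => by simpa using norm_le_pi_norm v i

private lemma norm_le_supAbs {n : ℕ} (v : Fin n → ℝ) : ‖v‖ ≤ ⨆ i, |v i| := by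
  refine (pi_norm_le_iff_of_nonneg (supAbs_nonneg v)).mpr fun i => ?_
  simpa using abs_le_supAbs v i

private lemma supAbs_pos_of_ne_zero {n : ℕ} {v : Fin n → ℝ} (hv : v ≠ 0) :
    0 < ⨆ i, |v i| := by
  obtain ⟨i, hi⟩ := Function.ne_iff.mp hv
  exact lt_of_lt_of_le (abs_pos.mpr hi) (abs_le_supAbs v i)

private lemma kappa_bddAbove {d m1 m2 : ℕ} (A1 : Matrix (Fin m1) (Fin d) ℝ)
    (A2 : Matrix (Fin m2) (Fin d) ℝ) :
    BddAbove {r : ℝ | ∃ y : Fin d → ℝ,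
        (∃ w1 : Fin m1 → ℝ, ∃ w2 : Fin m2 → ℝ,
            ∀ i, (∑ j, w1 j * A1 j i) + (∑ j, w2 j * A2 j i) = y i)
        ∧ y ≠ 0
        ∧ r = sInf {s : ℝ | ∃ w1 : Fin m1 → ℝ, ∃ w2 : Fin m2 → ℝ,
            (∀ i, (∑ j, w1 j * A1 j i) + (∑ j, w2 j * A2 j i) = y i)
            ∧ s = (⨆ i, |w1 i|) / (⨆ i, |y i|)}} := by
  classical
  set f : ((Fin m1 → ℝ) × (Fin m2 → ℝ)) →ₗ[ℝ] (Fin d → ℝ) :=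
    { toFun := fun w => fun i => (∑ j, w.1 j * A1 j i) + (∑ j, w.2 j * A2 j i)
      map_add' := by
        intro a b; funext i
        simp [add_mul, Finset.sum_add_distrib]; ring
      map_smul' := by
        intro c a; funext i
        simp [Finset.mul_sum, mul_assoc, mul_add] } with hf
  obtain ⟨g, hg⟩ := f.rangeRestrict.exists_rightInverse_of_surjective
    (LinearMap.range_rangeRestrict f)
  have hfg : ∀ yh : LinearMap.range f, f (g yh) = (yh : Fin d → ℝ) := by
    intro yh
    have := LinearMap.congr_fun hg yh
    exact congrArg Subtype.val this
  set G : (LinearMap.range f) →ₗ[ℝ] (Fin m1 → ℝ) := (LinearMap.fst ℝ _ _) ∘ₗ g with hG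
  set Gc := LinearMap.toContinuousLinearMap G with hGc
  refine ⟨‖Gc‖, ?_⟩
  rintro r ⟨y, ⟨w1, w2, hw⟩, hy0, rfl⟩
  have hymem : y ∈ LinearMap.range f := ⟨(w1, w2), funext fun i => hw i⟩
  set wv := g ⟨y, hymem⟩ with hwv
  have hwvy : ∀ i, (∑ j, wv.1 j * A1 j i) + (∑ j, wv.2 j * A2 j i) = y i :=
    fun i => congrFun (hfg ⟨y, hymem⟩) i
  have hNy : 0 < ⨆ i, |y i| := supAbs_pos_of_ne_zero hy0
  have hmem : (⨆ i, |wv.1 i|) / (⨆ i, |y i|) ∈ {s : ℝ | ∃ w1 : Fin m1 → ℝ, ∃ w2 : Fin m2 → ℝ,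
      (∀ i, (∑ j, w1 j * A1 j i) + (∑ j, w2 j * A2 j i) = y i)
      ∧ s = (⨆ i, |w1 i|) / (⨆ i, |y i|)} := ⟨wv.1, wv.2, hwvy, rfl⟩
  have hbdd : BddBelow {s : ℝ | ∃ w1 : Fin m1 → ℝ, ∃ w2 : Fin m2 → ℝ,
      (∀ i, (∑ j, w1 j * A1 j i) + (∑ j, w2 j * A2 j i) = y i)
      ∧ s = (⨆ i, |w1 i|) / (⨆ i, |y i|)} := by
    refine ⟨0, ?_⟩
    rintro s ⟨w1', w2', _, rfl⟩
    exact div_nonneg (supAbs_nonneg _) (supAbs_nonneg _)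
  refine le_trans (csInf_le hbdd hmem) ?_
  rw [div_le_iff₀ hNy]
  calc (⨆ i, |wv.1 i|) ≤ ‖wv.1‖ := supAbs_le_norm _
    _ = ‖G ⟨y, hymem⟩‖ := rfl
    _ = ‖Gc ⟨y, hymem⟩‖ := rfl
    _ ≤ ‖Gc‖ * ‖(⟨y, hymem⟩ : LinearMap.range f)‖ := Gc.le_opNorm _
    _ = ‖Gc‖ * ‖y‖ := rfl
    _ ≤ ‖Gc‖ * ⨆ i, |y i| :=
        mul_le_mul_of_nonneg_left (norm_le_supAbs y) (norm_nonneg Gc)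

theorem uniform_V1_bound
    {d m1 m2 : ℕ}
    (A1 : Matrix (Fin m1) (Fin d) ℝ) (A2 : Matrix (Fin m2) (Fin d) ℝ)
    (b1 : Fin m1 → ℝ) (b2 : Fin m2 → ℝ) (C z : Fin d → ℝ) (γ : ℝ)
    (hz : ∀ i, 0 < z i) (hγ : 0 < γ)
    -- b ∈ range(A)
    (hrange : ∃ x : Fin d → ℝ, A1.mulVec x = b1 ∧ A2.mulVec x = b2)
    -- dual objective
    (F : (Fin m1 → ℝ) → (Fin m2 → ℝ) → ℝ)
    (hF : ∀ u1 u2, F u1 u2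
        = (∑ i, b1 i * u1 i) + (∑ i, b2 i * u2 i) + γ * (∑ i, z i)
          - γ * ∑ i, z i * Real.exp
              (((∑ j, u1 j * A1 j i) + (∑ j, u2 j * A2 j i) - C i) / γ))
    -- primal map x(u)
    (xOf : (Fin m1 → ℝ) → (Fin m2 → ℝ) → Fin d → ℝ)
    (hxOf : ∀ u1 u2 i, xOf u1 u2 i
        = z i * Real.exp (((∑ j, u1 j * A1 j i) + (∑ j, u2 j * A2 j i) - C i) / γ))
    -- block-quotient seminorm ‖·‖_{V₁}
    (V1 : (Fin m1 → ℝ) → ℝ)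
    (hV1 : ∀ v, V1 v = sInf {r : ℝ | ∃ h1 : Fin m1 → ℝ, ∃ h2 : Fin m2 → ℝ,
        (∀ i, (∑ j, h1 j * A1 j i) + (∑ j, h2 j * A2 j i) = 0)
        ∧ r = ⨆ i, |v i + h1 i|})
    -- well-defined block maximization maps Ψ₁ and Ψ₂
    (Psi1 : (Fin m2 → ℝ) → Fin m1 → ℝ) (Psi2 : (Fin m1 → ℝ) → Fin m2 → ℝ)
    (hPsi1max : ∀ u2 w, F w u2 ≤ F (Psi1 u2) u2)
    (hPsi1uniq : ∀ u2 w, (∀ w', F w' u2 ≤ F w u2) → w = Psi1 u2)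
    (hPsi2max : ∀ u1 w, F u1 w ≤ F u1 (Psi2 u1))
    (hPsi2uniq : ∀ u1 w, (∀ w', F u1 w' ≤ F u1 w) → w = Psi2 u1)
    -- non-expansiveness of the sweep map Ψ = Ψ₁ ∘ Ψ₂ in the V₁-seminorm
    (hnonexp : ∀ a b : Fin m1 → ℝ,
        V1 (fun i => (Psi1 ∘ Psi2) a i - (Psi1 ∘ Psi2) b i) ≤ V1 (fun i => a i - b i))
    -- a dual maximizer u_γ with its primal optimum x_γ = x(u_γ)
    (uγ1 : Fin m1 → ℝ) (uγ2 : Fin m2 → ℝ)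
    (hmax : ∀ w1 w2, F w1 w2 ≤ F uγ1 uγ2)
    -- primal bound H in dual coordinates: ‖log x_γ - log z‖_∞ ≤ H
    (H : ℝ)
    (hH : (⨆ i, |Real.log (xOf uγ1 uγ2 i) - Real.log (z i)|) ≤ H)
    -- decomposition constant κ of the split (A₁, A₂)
    (kappa : ℝ)
    (hkappa : kappa = sSup {r : ℝ | ∃ y : Fin d → ℝ,
        (∃ w1 : Fin m1 → ℝ, ∃ w2 : Fin m2 → ℝ,
            ∀ i, (∑ j, w1 j * A1 j i) + (∑ j, w2 j * A2 j i) = y i)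
        ∧ y ≠ 0
        ∧ r = sInf {s : ℝ | ∃ w1 : Fin m1 → ℝ, ∃ w2 : Fin m2 → ℝ,
            (∀ i, (∑ j, w1 j * A1 j i) + (∑ j, w2 j * A2 j i) = y i)
            ∧ s = (⨆ i, |w1 i|) / (⨆ i, |y i|)}})
    -- initial point
    (u10 : Fin m1 → ℝ) :
    ∀ k : ℕ,
      V1 ((Psi1 ∘ Psi2)^[k] u10)
        ≤ V1 u10 + 2 * kappa * ((⨆ i, |C i|) + γ * H) := by
  classical
  -- basic facts about the defining sets of V1
  have hSne : ∀ v : Fin m1 → ℝ, Set.Nonempty {r : ℝ | ∃ h1 : Fin m1 → ℝ, ∃ h2 : Fin m2 → ℝ,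
      (∀ i, (∑ j, h1 j * A1 j i) + (∑ j, h2 j * A2 j i) = 0)
      ∧ r = ⨆ i, |v i + h1 i|} := by
    intro v
    exact ⟨⨆ i, |v i + (0:ℝ)|, fun _ => 0, fun _ => 0, by simp, rfl⟩
  have hSbdd : ∀ v : Fin m1 → ℝ, BddBelow {r : ℝ | ∃ h1 : Fin m1 → ℝ, ∃ h2 : Fin m2 → ℝ,
      (∀ i, (∑ j, h1 j * A1 j i) + (∑ j, h2 j * A2 j i) = 0)
      ∧ r = ⨆ i, |v i + h1 i|} := by
    intro v
    refine ⟨0, ?_⟩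
    rintro r ⟨h1, h2, _, rfl⟩
    exact supAbs_nonneg _
  have hV1le : ∀ (v h1 : Fin m1 → ℝ) (h2 : Fin m2 → ℝ),
      (∀ i, (∑ j, h1 j * A1 j i) + (∑ j, h2 j * A2 j i) = 0) →
      V1 v ≤ ⨆ i, |v i + h1 i| := by
    intro v h1 h2 hk
    rw [hV1]
    exact csInf_le (hSbdd v) ⟨h1, h2, hk, rfl⟩
  have hV1nonneg : ∀ v, 0 ≤ V1 v := by
    intro v
    rw [hV1]
    refine le_csInf (hSne v) ?_
    rintro r ⟨h1, h2, _, rfl⟩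
    exact supAbs_nonneg _
  -- triangle inequality for V1
  have hVtri : ∀ a b : Fin m1 → ℝ, V1 (fun i => a i + b i) ≤ V1 a + V1 b := by
    intro a b
    have key : ∀ r ∈ {r : ℝ | ∃ h1 : Fin m1 → ℝ, ∃ h2 : Fin m2 → ℝ,
        (∀ i, (∑ j, h1 j * A1 j i) + (∑ j, h2 j * A2 j i) = 0)
        ∧ r = ⨆ i, |a i + h1 i|}, V1 (fun i => a i + b i) - V1 b ≤ r := by
      rintro r ⟨h1, h2, hk, rfl⟩
      rw [sub_le_iff_le_add]
      have key2 : ∀ r' ∈ {r' : ℝ | ∃ h1' : Fin m1 → ℝ, ∃ h2' : Fin m2 → ℝ,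
          (∀ i, (∑ j, h1' j * A1 j i) + (∑ j, h2' j * A2 j i) = 0)
          ∧ r' = ⨆ i, |b i + h1' i|},
          V1 (fun i => a i + b i) - (⨆ i, |a i + h1 i|) ≤ r' := by
        rintro r' ⟨h1', h2', hk', rfl⟩
        rw [sub_le_iff_le_add]
        have hker : ∀ i, (∑ j, (h1 j + h1' j) * A1 j i) + (∑ j, (h2 j + h2' j) * A2 j i) = 0 := by
          intro i
          have := hk i
          have := hk' i
          simp only [add_mul, Finset.sum_add_distrib]
          linarith
        calc V1 (fun i => a i + b i)
            ≤ ⨆ i, |(a i + b i) + (h1 i + h1' i)| :=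
              hV1le _ (fun j => h1 j + h1' j) (fun j => h2 j + h2' j) hker
          _ ≤ (⨆ i, |b i + h1' i|) + (⨆ i, |a i + h1 i|) := by
              refine Real.iSup_le (fun i => ?_)
                (add_nonneg (supAbs_nonneg _) (supAbs_nonneg _))
              calc |(a i + b i) + (h1 i + h1' i)|
                  ≤ |a i + h1 i| + |b i + h1' i| := by
                    have h := abs_add_le (a i + h1 i) (b i + h1' i)
                    calc |(a i + b i) + (h1 i + h1' i)|
                        = |(a i + h1 i) + (b i + h1' i)| := by ring_nf
                      _ ≤ _ := h
                _ ≤ (⨆ i, |b i + h1' i|) + (⨆ i, |a i + h1 i|) := by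
                    have := abs_le_supAbs (fun i => a i + h1 i) i
                    have := abs_le_supAbs (fun i => b i + h1' i) i
                    linarith
      have h2 := le_csInf (hSne b) key2
      rw [← hV1 b] at h2
      linarith
    have h1 := le_csInf (hSne a) key
    rw [← hV1 a] at h1
    linarith
  -- symmetry of V1 under negation
  have hVneg_le : ∀ v : Fin m1 → ℝ, V1 (fun i => -(v i)) ≤ V1 v := by
    intro v
    rw [hV1 v]
    refine le_csInf (hSne v) ?_
    rintro r ⟨h1, h2, hk, rfl⟩
    have hker : ∀ i, (∑ j, (-(h1 j)) * A1 j i) + (∑ j, (-(h2 j)) * A2 j i) = 0 := by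
      intro i
      have := hk i
      simp only [neg_mul, Finset.sum_neg_distrib]
      linarith
    have := hV1le (fun i => -(v i)) (fun j => -(h1 j)) (fun j => -(h2 j)) hker
    refine this.trans (le_of_eq ?_)
    congr 1
    funext i
    rw [show -(v i) + -(h1 i) = -(v i + h1 i) by ring, abs_neg]
  have hVneg : ∀ v : Fin m1 → ℝ, V1 (fun i => -(v i)) = V1 v := by
    intro v
    refine le_antisymm (hVneg_le v) ?_
    have := hVneg_le (fun i => -(v i))
    simpa using this
  -- kappa is nonnegative
  have hκ0 : 0 ≤ kappa := by
    rw [hkappa]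
    apply Real.sSup_nonneg
    rintro r ⟨y', _, _, rfl⟩
    apply Real.sInf_nonneg
    rintro s ⟨w1, w2, _, rfl⟩
    exact div_nonneg (supAbs_nonneg _) (supAbs_nonneg _)
  -- the image y = Aᵀ u_γ and its bound
  set y : Fin d → ℝ := fun i => (∑ j, uγ1 j * A1 j i) + (∑ j, uγ2 j * A2 j i) with hy
  have hylog : ∀ i, y i = C i + γ * (Real.log (xOf uγ1 uγ2 i) - Real.log (z i)) := by
    intro i
    rw [hxOf, Real.log_mul (ne_of_gt (hz i)) (Real.exp_ne_zero _), Real.log_exp]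
    show (∑ j, uγ1 j * A1 j i) + (∑ j, uγ2 j * A2 j i) = _
    field_simp
    ring
  have hH0 : 0 ≤ H := (supAbs_nonneg _).trans hH
  have hD0 : 0 ≤ (⨆ i, |C i|) + γ * H :=
    add_nonneg (supAbs_nonneg C) (mul_nonneg hγ.le hH0)
  have hyB : (⨆ i, |y i|) ≤ (⨆ i, |C i|) + γ * H := by
    refine supAbs_le _ hD0 fun i => ?_
    rw [hylog i]
    calc |C i + γ * (Real.log (xOf uγ1 uγ2 i) - Real.log (z i))|
        ≤ |C i| + γ * |Real.log (xOf uγ1 uγ2 i) - Real.log (z i)| := by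
          refine (abs_add_le _ _).trans ?_
          rw [abs_mul, abs_of_pos hγ]
      _ ≤ (⨆ i, |C i|) + γ * H := by
          refine add_le_add (abs_le_supAbs C i) (mul_le_mul_of_nonneg_left ?_ hγ.le)
          exact (abs_le_supAbs (fun i => Real.log (xOf uγ1 uγ2 i) - Real.log (z i)) i).trans hH
  -- the key bound V1 uγ1 ≤ kappa * (‖C‖∞ + γ H)
  have hVuγ : V1 uγ1 ≤ kappa * ((⨆ i, |C i|) + γ * H) := by
    by_cases hy0 : y = 0
    · have hker : ∀ i, (∑ j, (-(uγ1 j)) * A1 j i) + (∑ j, (-(uγ2 j)) * A2 j i) = 0 := by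
        intro i
        have h0 : (∑ j, uγ1 j * A1 j i) + (∑ j, uγ2 j * A2 j i) = 0 := by
          have := congrFun hy0 i
          simpa [hy] using this
        simp only [neg_mul, Finset.sum_neg_distrib]
        linarith
      have hle := hV1le uγ1 (fun j => -(uγ1 j)) (fun j => -(uγ2 j)) hker
      have hzero : (⨆ i, |uγ1 i + -(uγ1 i)|) ≤ 0 := by
        refine supAbs_le _ le_rfl fun i => ?_
        simp
      have : V1 uγ1 ≤ 0 := hle.trans hzero
      exact this.trans (mul_nonneg hκ0 hD0)
    · have hNy : 0 < ⨆ i, |y i| := supAbs_pos_of_ne_zero hy0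
      have hTne : Set.Nonempty {s : ℝ | ∃ w1 : Fin m1 → ℝ, ∃ w2 : Fin m2 → ℝ,
          (∀ i, (∑ j, w1 j * A1 j i) + (∑ j, w2 j * A2 j i) = y i)
          ∧ s = (⨆ i, |w1 i|) / (⨆ i, |y i|)} :=
        ⟨_, uγ1, uγ2, fun i => rfl, rfl⟩
      have hTlb : ∀ s ∈ {s : ℝ | ∃ w1 : Fin m1 → ℝ, ∃ w2 : Fin m2 → ℝ,
          (∀ i, (∑ j, w1 j * A1 j i) + (∑ j, w2 j * A2 j i) = y i)
          ∧ s = (⨆ i, |w1 i|) / (⨆ i, |y i|)},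
          V1 uγ1 / (⨆ i, |y i|) ≤ s := by
        rintro s ⟨w1, w2, hw, rfl⟩
        have hker : ∀ i, (∑ j, (w1 j - uγ1 j) * A1 j i) + (∑ j, (w2 j - uγ2 j) * A2 j i) = 0 := by
          intro i
          have h1 := hw i
          have h2 : (∑ j, uγ1 j * A1 j i) + (∑ j, uγ2 j * A2 j i) = y i := rfl
          simp only [sub_mul, Finset.sum_sub_distrib]
          linarith
        have hle : V1 uγ1 ≤ ⨆ i, |w1 i| := by
          have := hV1le uγ1 (fun j => w1 j - uγ1 j) (fun j => w2 j - uγ2 j) hker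
          simpa using this
        gcongr
      have hr0 : V1 uγ1 / (⨆ i, |y i|)
          ≤ sInf {s : ℝ | ∃ w1 : Fin m1 → ℝ, ∃ w2 : Fin m2 → ℝ,
              (∀ i, (∑ j, w1 j * A1 j i) + (∑ j, w2 j * A2 j i) = y i)
              ∧ s = (⨆ i, |w1 i|) / (⨆ i, |y i|)} := le_csInf hTne hTlb
      have hrκ : sInf {s : ℝ | ∃ w1 : Fin m1 → ℝ, ∃ w2 : Fin m2 → ℝ,
              (∀ i, (∑ j, w1 j * A1 j i) + (∑ j, w2 j * A2 j i) = y i)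
              ∧ s = (⨆ i, |w1 i|) / (⨆ i, |y i|)} ≤ kappa := by
        rw [hkappa]
        exact le_csSup (kappa_bddAbove A1 A2) ⟨y, ⟨uγ1, uγ2, fun i => rfl⟩, hy0, rfl⟩
      have hmul : V1 uγ1 ≤ sInf {s : ℝ | ∃ w1 : Fin m1 → ℝ, ∃ w2 : Fin m2 → ℝ,
              (∀ i, (∑ j, w1 j * A1 j i) + (∑ j, w2 j * A2 j i) = y i)
              ∧ s = (⨆ i, |w1 i|) / (⨆ i, |y i|)} * (⨆ i, |y i|) :=
        (div_le_iff₀ hNy).mp hr0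
      have hinf0 : 0 ≤ sInf {s : ℝ | ∃ w1 : Fin m1 → ℝ, ∃ w2 : Fin m2 → ℝ,
              (∀ i, (∑ j, w1 j * A1 j i) + (∑ j, w2 j * A2 j i) = y i)
              ∧ s = (⨆ i, |w1 i|) / (⨆ i, |y i|)} :=
        le_trans (div_nonneg (hV1nonneg uγ1) hNy.le) hr0
      exact hmul.trans (mul_le_mul hrκ hyB (supAbs_nonneg y) hκ0)
  -- fixed point of the sweep map
  have hfix2 : Psi2 uγ1 = uγ2 := (hPsi2uniq uγ1 uγ2 (fun w' => hmax uγ1 w')).symm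
  have hfix1 : Psi1 uγ2 = uγ1 := (hPsi1uniq uγ2 uγ1 (fun w' => hmax w' uγ2)).symm
  have hfix : (Psi1 ∘ Psi2) uγ1 = uγ1 := by
    simp [Function.comp, hfix2, hfix1]
  intro k
  have hiter : ∀ n : ℕ, V1 (fun i => (Psi1 ∘ Psi2)^[n] u10 i - uγ1 i)
      ≤ V1 (fun i => u10 i - uγ1 i) := by
    intro n
    induction n with
    | zero => simp
    | succ n ih =>
      have h1 := hnonexp ((Psi1 ∘ Psi2)^[n] u10) uγ1
      rw [hfix] at h1
      calc V1 (fun i => (Psi1 ∘ Psi2)^[n+1] u10 i - uγ1 i)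
          = V1 (fun i => (Psi1 ∘ Psi2) ((Psi1 ∘ Psi2)^[n] u10) i - uγ1 i) := by
            rw [Function.iterate_succ_apply']
        _ ≤ V1 (fun i => (Psi1 ∘ Psi2)^[n] u10 i - uγ1 i) := h1
        _ ≤ _ := ih
  have t1 : V1 ((Psi1 ∘ Psi2)^[k] u10)
      ≤ V1 (fun i => (Psi1 ∘ Psi2)^[k] u10 i - uγ1 i) + V1 uγ1 := by
    have h := hVtri (fun i => (Psi1 ∘ Psi2)^[k] u10 i - uγ1 i) uγ1
    simpa using h
  have t2 : V1 (fun i => u10 i - uγ1 i) ≤ V1 u10 + V1 uγ1 := by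
    have h := hVtri u10 (fun i => -(uγ1 i))
    rw [hVneg uγ1] at h
    simpa [sub_eq_add_neg] using h
  linarith [hiter k, hVuγ, t1, t2]
end
end

section
/- H_gamma bound for entropic optimal transport: let b_1 in R^{m_1}_{++} and b_2 in R^{m_2}_{++} be probability vectors, C in R^{m_1 x m_2} a cost matrix with C >= 0 entrywise, gamma > 0, and z := b_1 ⊗ b_2 (i.e., z_{ij} = b_{1,i}*b_{2,j}). Let P_gamma be the unique minimizer of min{ <C,P> + gamma*KL(P|z) : P in R^{m_1 x m_2}_{++}, P*1 = b_1, P^T*1 = b_2 }. Then ||log P_gamma - log z||_inf <= |log(min(b))| + 2*||C||_inf/gamma, where min(b) denotes the smallest entry among all entries of b_1 and b_2. -/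
/-!
STATEMENT 8: `H_γ` bound for entropic optimal transport: the unique minimizer
`P_γ` of the entropic OT problem with reference `z = b₁ ⊗ b₂` satisfies
`‖log P_γ - log z‖_∞ ≤ |log(min b)| + 2 ‖C‖_∞ / γ`.
-/

noncomputable section

open Real


lemma hasDerivAt_term (c p d w g : ℝ) (hp : 0 < p) :
    HasDerivAt (fun t : ℝ => c * (p + t * d) +
      g * ((p + t * d) * (Real.log (p + t * d) - Real.log w) - (p + t * d) + w))
      (d * (c + g * (Real.log p - Real.log w))) 0 := by
  have hx : HasDerivAt (fun t : ℝ => p + t * d) d 0 := by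
    simpa using ((hasDerivAt_id (0 : ℝ)).mul_const d).const_add p
  have hp0 : p + (0 : ℝ) * d = p := by ring
  have hmul : HasDerivAt (fun x : ℝ => x * Real.log x) (Real.log p + 1) p :=
    Real.hasDerivAt_mul_log hp.ne'
  rw [← hp0] at hmul
  have hlog : HasDerivAt (fun t : ℝ => (p + t * d) * Real.log (p + t * d))
      ((Real.log (p + 0 * d) + 1) * d) 0 := by have := hmul.comp 0 hx; exact this
  have heq : (fun t : ℝ => c * (p + t * d) +
      g * ((p + t * d) * (Real.log (p + t * d) - Real.log w) - (p + t * d) + w))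
      = fun t : ℝ => c * (p + t * d) +
      g * (((p + t * d) * Real.log (p + t * d) - (p + t * d) * Real.log w) - (p + t * d) + w) := by
    funext t; ring
  rw [heq]
  have h2 : HasDerivAt (fun t : ℝ =>
      ((p + t * d) * Real.log (p + t * d) - (p + t * d) * Real.log w) - (p + t * d) + w)
      (((Real.log (p + 0 * d) + 1) * d - d * Real.log w) - d) 0 :=
    ((hlog.sub (hx.mul_const (Real.log w))).sub hx).add_const w
  have h3 := (hx.const_mul c).add (h2.const_mul g)
  exact h3.congr_deriv (by rw [hp0]; ring)

lemma key_foc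
    {m1 m2 : ℕ}
    (b1 : Fin m1 → ℝ) (b2 : Fin m2 → ℝ)
    (C : Matrix (Fin m1) (Fin m2) ℝ) (γ : ℝ) (hγ : 0 < γ)
    (hb1 : ∀ i, 0 < b1 i) (hb2 : ∀ j, 0 < b2 j)
    (KL : Matrix (Fin m1) (Fin m2) ℝ → Matrix (Fin m1) (Fin m2) ℝ → ℝ)
    (hKL : ∀ P w, KL P w
        = ∑ i, ∑ j, (P i j * Real.log (P i j / w i j) - P i j + w i j))
    (P : Matrix (Fin m1) (Fin m2) ℝ)
    (hPpos : ∀ i j, 0 < P i j)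
    (hProw : ∀ i, ∑ j, P i j = b1 i)
    (hPcol : ∀ j, ∑ i, P i j = b2 j)
    (hPopt : ∀ Q : Matrix (Fin m1) (Fin m2) ℝ,
        (∀ i j, 0 < Q i j) → (∀ i, ∑ j, Q i j = b1 i) → (∀ j, ∑ i, Q i j = b2 j) →
        (∑ i, ∑ j, C i j * P i j) + γ * KL P (fun i j => b1 i * b2 j)
          ≤ (∑ i, ∑ j, C i j * Q i j) + γ * KL Q (fun i j => b1 i * b2 j))
    (i i' : Fin m1) (j j' : Fin m2) :
    (C i j + γ * (Real.log (P i j) - Real.log (b1 i * b2 j)))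
      + (C i' j' + γ * (Real.log (P i' j') - Real.log (b1 i' * b2 j')))
    = (C i j' + γ * (Real.log (P i j') - Real.log (b1 i * b2 j')))
      + (C i' j + γ * (Real.log (P i' j) - Real.log (b1 i' * b2 j))) := by
  classical
  by_cases hii : i = i'
  · subst hii; ring
  by_cases hjj : j = j'
  · subst hjj; ring
  set g : Fin m1 → Fin m2 → ℝ :=
    fun a b => C a b + γ * (Real.log (P a b) - Real.log (b1 a * b2 b)) with hgdef
  set D : Fin m1 → Fin m2 → ℝ := fun a b =>
    (if a = i then ((if b = j then (1 : ℝ) else 0) - (if b = j' then 1 else 0)) else 0)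
    + (if a = i' then ((if b = j' then (1 : ℝ) else 0) - (if b = j then 1 else 0)) else 0)
    with hDdef
  have hDrow : ∀ a, ∑ b, D a b = 0 := by
    intro a
    by_cases ha : a = i <;> by_cases ha' : a = i' <;>
      simp [hDdef, ha, ha', Finset.sum_add_distrib, Finset.sum_sub_distrib,
        Finset.sum_ite_eq', hii]
  have hDcol : ∀ b, ∑ a, D a b = 0 := by
    intro b
    rw [Finset.sum_add_distrib]
    simp only [Finset.sum_ite_eq', Finset.mem_univ, if_true]
    ring
  have hDle : ∀ a b, |D a b| ≤ 1 := by
    intro a b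
    by_cases ha : a = i <;> by_cases ha' : a = i' <;>
      by_cases hb : b = j <;> by_cases hb' : b = j' <;>
      simp [hDdef, ha, ha', hb, hb', hii, hjj, Ne.symm hii, Ne.symm hjj] <;> norm_num
  have : Nonempty (Fin m1 × Fin m2) := ⟨(i, j)⟩
  obtain ⟨⟨a0, b0⟩, hmin⟩ := Finite.exists_min (fun ab : Fin m1 × Fin m2 => P ab.1 ab.2)
  set ε : ℝ := P a0 b0 with hεdef
  have hεpos : 0 < ε := hPpos a0 b0
  have hPmin : ∀ a b, ε ≤ P a b := fun a b => hmin (a, b)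
  have hQpos : ∀ t : ℝ, |t| < ε → ∀ a b, 0 < P a b + t * D a b := by
    intro t ht a b
    have h1 : |t * D a b| ≤ |t| := by
      rw [abs_mul]
      nlinarith [abs_nonneg t, hDle a b, abs_nonneg (D a b)]
    have h2 := neg_abs_le (t * D a b)
    have h3 := hPmin a b
    linarith
  have hQrow : ∀ t : ℝ, ∀ a, ∑ b, (P a b + t * D a b) = b1 a := by
    intro t a
    rw [Finset.sum_add_distrib, hProw, ← Finset.mul_sum, hDrow, mul_zero, add_zero]
  have hQcol : ∀ t : ℝ, ∀ b, ∑ a, (P a b + t * D a b) = b2 b := by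
    intro t b
    rw [Finset.sum_add_distrib, hPcol, ← Finset.mul_sum, hDcol, mul_zero, add_zero]
  have hzpos : ∀ a b, 0 < b1 a * b2 b := fun a b => mul_pos (hb1 a) (hb2 b)
  set φ : ℝ → ℝ := fun t => ∑ a, ∑ b,
      (C a b * (P a b + t * D a b) +
        γ * ((P a b + t * D a b) *
              (Real.log (P a b + t * D a b) - Real.log (b1 a * b2 b))
             - (P a b + t * D a b) + b1 a * b2 b)) with hφdef
  have hobj : ∀ t : ℝ, |t| < ε →
      φ t = (∑ a, ∑ b, C a b * (P a b + t * D a b))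
            + γ * KL (fun a b => P a b + t * D a b) (fun a b => b1 a * b2 b) := by
    intro t ht
    refine Eq.trans ?_ (congrArg (fun x => (∑ a, ∑ b, C a b * (P a b + t * D a b)) + γ * x) (hKL _ _).symm)
    simp only [hφdef]
    rw [Finset.mul_sum, ← Finset.sum_add_distrib]
    refine Finset.sum_congr rfl fun a _ => ?_
    rw [Finset.mul_sum, ← Finset.sum_add_distrib]
    refine Finset.sum_congr rfl fun b _ => ?_
    rw [Real.log_div (hQpos t ht a b).ne' (hzpos a b).ne']
  have hmin0 : IsLocalMin φ 0 := by
    have hb : Metric.ball (0 : ℝ) ε ∈ nhds (0 : ℝ) := Metric.ball_mem_nhds 0 hεpos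
    refine Filter.eventually_of_mem hb fun t ht => ?_
    have ht' : |t| < ε := by simpa [Real.dist_eq] using ht
    have h0' : |(0 : ℝ)| < ε := by simpa using hεpos
    rw [hobj 0 h0', hobj t ht']
    have hQ0 : (fun a b => P a b + (0 : ℝ) * D a b) = P := by
      funext a b; ring
    rw [hQ0]
    simp only [zero_mul, add_zero]
    exact hPopt (fun a b => P a b + t * D a b) (hQpos t ht') (hQrow t) (hQcol t)
  have hderiv : HasDerivAt φ (∑ a, ∑ b, D a b * g a b) 0 := by
    rw [hφdef]
    apply HasDerivAt.fun_sum
    intro a _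
    apply HasDerivAt.fun_sum
    intro b _
    have := hasDerivAt_term (C a b) (P a b) (D a b) (b1 a * b2 b) γ (hPpos a b)
    convert this using 1
  have hd0 : (∑ a, ∑ b, D a b * g a b) = 0 := hmin0.hasDerivAt_eq_zero hderiv
  have hrowsum : ∀ a, ∑ b, D a b * g a b
      = (if a = i then g a j - g a j' else 0) + (if a = i' then g a j' - g a j else 0) := by
    intro a
    by_cases ha : a = i <;> by_cases ha' : a = i' <;>
      simp [hDdef, ha, ha', hii, hjj, sub_mul, add_mul, Finset.sum_add_distrib,
        Finset.sum_sub_distrib, Finset.sum_ite_eq', ite_mul, Ne.symm hii, Ne.symm hjj]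
  have hsum : (∑ a, ∑ b, D a b * g a b)
      = (g i j - g i j') + (g i' j' - g i' j) := by
    rw [Finset.sum_congr rfl fun a _ => hrowsum a, Finset.sum_add_distrib]
    simp [Finset.sum_ite_eq', hii, Ne.symm hii]
  rw [hsum] at hd0
  have : g i j + g i' j' = g i j' + g i' j := by linarith
  simpa [hgdef] using this


theorem Hgamma_main
    {m1 m2 : ℕ} (hm1 : 0 < m1) (hm2 : 0 < m2)
    (b1 : Fin m1 → ℝ) (b2 : Fin m2 → ℝ)
    (C : Matrix (Fin m1) (Fin m2) ℝ) (γ : ℝ) (hγ : 0 < γ)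
    (hb1 : ∀ i, 0 < b1 i) (hb2 : ∀ j, 0 < b2 j)
    (hb1sum : ∑ i, b1 i = 1) (hb2sum : ∑ j, b2 j = 1)
    (hC : ∀ i j, 0 ≤ C i j)
    (P : Matrix (Fin m1) (Fin m2) ℝ)
    (hPpos : ∀ i j, 0 < P i j)
    (hProw : ∀ i, ∑ j, P i j = b1 i)
    (hPcol : ∀ j, ∑ i, P i j = b2 j)
    (key : ∀ (i i' : Fin m1) (j j' : Fin m2),
    (C i j + γ * (Real.log (P i j) - Real.log (b1 i * b2 j)))
      + (C i' j' + γ * (Real.log (P i' j') - Real.log (b1 i' * b2 j')))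
    = (C i j' + γ * (Real.log (P i j') - Real.log (b1 i * b2 j')))
      + (C i' j + γ * (Real.log (P i' j) - Real.log (b1 i' * b2 j)))) :
    ∀ i j,
      |Real.log (P i j) - Real.log (b1 i * b2 j)|
        ≤ |Real.log (min (⨅ i, b1 i) (⨅ j, b2 j))|
          + 2 * (⨆ i, ⨆ j, |C i j|) / γ := by
  intro i j
  -- basic setup
  have hFin1 : Nonempty (Fin m1) := ⟨i⟩
  have hFin2 : Nonempty (Fin m2) := ⟨j⟩
  set mb : ℝ := min (⨅ i, b1 i) (⨅ j, b2 j) with hmb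
  -- infima are attained
  obtain ⟨i0, hi0⟩ := Finite.exists_min b1
  obtain ⟨j0, hj0⟩ := Finite.exists_min b2
  have hinf1 : (⨅ i, b1 i) = b1 i0 :=
    le_antisymm (ciInf_le (Set.finite_range b1).bddBelow i0) (le_ciInf hi0)
  have hinf2 : (⨅ j, b2 j) = b2 j0 :=
    le_antisymm (ciInf_le (Set.finite_range b2).bddBelow j0) (le_ciInf hj0)
  have hmbpos : 0 < mb := by
    rw [hmb, hinf1, hinf2]
    exact lt_min (hb1 i0) (hb2 j0)
  have hmb_le_b1 : ∀ a, mb ≤ b1 a := fun a => le_trans (min_le_left _ _) (hinf1 ▸ hi0 a)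
  have hmb_le_b2 : ∀ b, mb ≤ b2 b := fun b => le_trans (min_le_right _ _) (hinf2 ▸ hj0 b)
  have hb1le1 : ∀ a, b1 a ≤ 1 := by
    intro a
    rw [← hb1sum]
    exact Finset.single_le_sum (fun x _ => (hb1 x).le) (Finset.mem_univ a)
  have hmble1 : mb ≤ 1 := le_trans (hmb_le_b1 i) (hb1le1 i)
  set L : ℝ := |Real.log mb| with hL
  have hLval : L = -Real.log mb := by
    rw [hL, abs_of_nonpos (Real.log_nonpos hmbpos.le hmble1)]
  have hLnonneg : 0 ≤ L := abs_nonneg _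
  -- sup norm of C
  set Cn : ℝ := ⨆ a, ⨆ b, |C a b| with hCn
  have hCb : ∀ a b, C a b ≤ Cn := by
    intro a b
    calc C a b ≤ |C a b| := le_abs_self _
    _ ≤ ⨆ b, |C a b| := le_ciSup (f := fun b => |C a b|) (Set.finite_range _).bddAbove b
    _ ≤ Cn := le_ciSup (f := fun a => ⨆ b, |C a b|) (Set.finite_range _).bddAbove a
  have hCnonneg : 0 ≤ Cn := le_trans (abs_nonneg (C i j)) (by
    calc |C i j| ≤ ⨆ b, |C i b| := le_ciSup (f := fun b => |C i b|) (Set.finite_range _).bddAbove j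
    _ ≤ Cn := le_ciSup (f := fun a => ⨆ b, |C a b|) (Set.finite_range _).bddAbove i)
  -- abbreviations
  set s : Fin m1 → Fin m2 → ℝ :=
    fun a b => Real.log (P a b) - Real.log (b1 a * b2 b) with hs
  set h : Fin m1 → Fin m2 → ℝ := fun a b => C a b + γ * s a b with hh
  clear_value mb L Cn s h
  -- upper bound on s
  have hsub : ∀ a b, s a b ≤ L := by
    intro a b
    have hPle : P a b ≤ b1 a := by
      rw [← hProw a]
      exact Finset.single_le_sum (fun x _ => (hPpos a x).le) (Finset.mem_univ b)
    have h1 : Real.log (P a b) ≤ Real.log (b1 a) :=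
      Real.log_le_log (hPpos a b) hPle
    have h2 : Real.log (b1 a * b2 b) = Real.log (b1 a) + Real.log (b2 b) :=
      Real.log_mul (hb1 a).ne' (hb2 b).ne'
    have h3 : Real.log mb ≤ Real.log (b2 b) :=
      Real.log_le_log hmbpos (hmb_le_b2 b)
    rw [hs]
    simp only
    rw [h2, hLval]
    linarith
  -- upper bound on h
  have hhub : ∀ a b, h a b ≤ Cn + γ * L := by
    intro a b
    have := hsub a b
    have := hCb a b
    rw [hh]
    simp only
    nlinarith
  -- existence of nonneg entries in each row
  have hex_row : ∀ a, ∃ b, 0 ≤ s a b := by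
    intro a
    by_contra hcon
    push_neg at hcon
    have hlt : ∀ b, P a b < b1 a * b2 b := by
      intro b
      have := hcon b
      rw [hs] at this
      simp only at this
      exact (Real.log_lt_log_iff (hPpos a b) (mul_pos (hb1 a) (hb2 b))).mp (by linarith)
    have hsumlt : ∑ b, P a b < ∑ b, b1 a * b2 b :=
      Finset.sum_lt_sum_of_nonempty Finset.univ_nonempty fun b _ => hlt b
    rw [hProw a, ← Finset.mul_sum, hb2sum, mul_one] at hsumlt
    exact lt_irrefl _ hsumlt
  have hex_col : ∀ b, ∃ a, 0 ≤ s a b := by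
    intro b
    by_contra hcon
    push_neg at hcon
    have hlt : ∀ a, P a b < b1 a * b2 b := by
      intro a
      have := hcon a
      rw [hs] at this
      simp only at this
      exact (Real.log_lt_log_iff (hPpos a b) (mul_pos (hb1 a) (hb2 b))).mp (by linarith)
    have hsumlt : ∑ a, P a b < ∑ a, b1 a * b2 b :=
      Finset.sum_lt_sum_of_nonempty Finset.univ_nonempty fun a _ => hlt a
    rw [hPcol b, ← Finset.sum_mul, hb1sum, one_mul] at hsumlt
    exact lt_irrefl _ hsumlt
  -- h nonneg somewhere in each row/column
  obtain ⟨js, hjs⟩ := hex_row i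
  obtain ⟨is, his⟩ := hex_col j
  have hh_ijs : 0 ≤ h i js := by
    rw [hh]; simp only
    nlinarith [hC i js]
  have hh_isj : 0 ≤ h is j := by
    rw [hh]; simp only
    nlinarith [hC is j]
  -- key identity: h i j = h i js + h is j - h is js
  have hkey : h i j + h is js = h i js + h is j := by
    have := key i is j js
    rw [hh, hs]
    simp only
    linarith [this]
  have hlb : -(Cn + γ * L) ≤ h i j := by
    have h1 := hhub is js
    linarith
  -- conclude
  have hslb : -(L + 2 * Cn / γ) ≤ s i j := by
    have h1 : C i j + γ * s i j = h i j := by rw [hh]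

    have h2 : γ * s i j ≥ -(Cn + γ * L) - Cn := by
      have := hCb i j
      linarith
    have h3 : γ * (-(L + 2 * Cn / γ)) = -(Cn + γ * L) - Cn := by
      field_simp
      ring
    rw [← h3] at h2
    exact le_of_mul_le_mul_left h2 hγ
  have hsup : s i j ≤ L + 2 * Cn / γ := by
    have := hsub i j
    have : 0 ≤ 2 * Cn / γ := by positivity
    linarith [hsub i j]
  have : |s i j| ≤ L + 2 * Cn / γ := abs_le.mpr ⟨hslb, hsup⟩
  simpa [hs, hL, hCn, hmb] using this


theorem Hgamma_entropic_OT
    {m1 m2 : ℕ} (hm1 : 0 < m1) (hm2 : 0 < m2)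
    (b1 : Fin m1 → ℝ) (b2 : Fin m2 → ℝ)
    (C : Matrix (Fin m1) (Fin m2) ℝ) (γ : ℝ) (hγ : 0 < γ)
    (hb1 : ∀ i, 0 < b1 i) (hb2 : ∀ j, 0 < b2 j)
    (hb1sum : ∑ i, b1 i = 1) (hb2sum : ∑ j, b2 j = 1)
    (hC : ∀ i j, 0 ≤ C i j) (hC0 : ∃ i j, C i j = 0)
    -- KL divergence on couplings
    (KL : Matrix (Fin m1) (Fin m2) ℝ → Matrix (Fin m1) (Fin m2) ℝ → ℝ)
    (hKL : ∀ P w, KL P w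
        = ∑ i, ∑ j, (P i j * Real.log (P i j / w i j) - P i j + w i j))
    -- P_γ : the minimizer of the entropic OT problem
    (P : Matrix (Fin m1) (Fin m2) ℝ)
    (hPpos : ∀ i j, 0 < P i j)
    (hProw : ∀ i, ∑ j, P i j = b1 i)
    (hPcol : ∀ j, ∑ i, P i j = b2 j)
    (hPopt : ∀ Q : Matrix (Fin m1) (Fin m2) ℝ,
        (∀ i j, 0 < Q i j) → (∀ i, ∑ j, Q i j = b1 i) → (∀ j, ∑ i, Q i j = b2 j) →
        (∑ i, ∑ j, C i j * P i j) + γ * KL P (fun i j => b1 i * b2 j)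
          ≤ (∑ i, ∑ j, C i j * Q i j) + γ * KL Q (fun i j => b1 i * b2 j)) :
    ∀ i j,
      |Real.log (P i j) - Real.log (b1 i * b2 j)|
        ≤ |Real.log (min (⨅ i, b1 i) (⨅ j, b2 j))|
          + 2 * (⨆ i, ⨆ j, |C i j|) / γ :=
  Hgamma_main hm1 hm2 b1 b2 C γ hγ hb1 hb2 hb1sum hb2sum hC P hPpos hProw hPcol
    (fun i i' j j' => key_foc b1 b2 C γ hγ hb1 hb2 KL hKL P hPpos hProw hPcol hPopt i i' j j')

end
end

section
/- Decomposition constant for classical optimal transport equals one: for the splitting A_1(P) := P*1 and A_2(P) := P^T*1 of the transport-polytope constraints, one can take kappa = 1. Concretely: for every nonzero matrix Y in R^{m_1 x m_2} of the form Y_{ij} = alpha_i + beta_j, there exist vectors w_1 in R^{m_1} and w_2 in R^{m_2} such that Y_{ij} = (w_1)_i + (w_2)_j for all (i,j) and ||w_1||_inf <= ||Y||_inf. -/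
/-!
STATEMENT 9: Decomposition constant for classical optimal transport equals one:
every nonzero matrix of the form `Y_{ij} = α_i + β_j` can be rewritten as
`Y_{ij} = (w₁)_i + (w₂)_j` with `‖w₁‖_∞ ≤ ‖Y‖_∞`.
-/

noncomputable section

theorem kappa_classical_OT
    {m1 m2 : ℕ}
    (Y : Matrix (Fin m1) (Fin m2) ℝ) (hY : Y ≠ 0)
    (α : Fin m1 → ℝ) (β : Fin m2 → ℝ)
    (hrep : ∀ i j, Y i j = α i + β j) :
    ∃ w1 : Fin m1 → ℝ, ∃ w2 : Fin m2 → ℝ,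
      (∀ i j, Y i j = w1 i + w2 j)
      ∧ (⨆ i, |w1 i|) ≤ ⨆ i, ⨆ j, |Y i j| := by
  rcases Nat.eq_zero_or_pos m2 with h2 | h2
  · exfalso
    apply hY
    ext i j
    exact absurd (j.2.trans_eq h2) (Nat.not_lt_zero _)
  have : Nonempty (Fin m2) := ⟨⟨0, h2⟩⟩
  obtain ⟨j0⟩ := this
  refine ⟨fun i => Y i j0, fun j => β j - β j0, ?_, ?_⟩
  · intro i j
    simp only [hrep i j, hrep i j0]
    ring
  · rcases Nat.eq_zero_or_pos m1 with h1 | h1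
    · have he : IsEmpty (Fin m1) := ⟨fun i => absurd (i.2.trans_eq h1) (Nat.not_lt_zero _)⟩
      simp [Real.iSup_of_isEmpty]
    have : Nonempty (Fin m1) := ⟨⟨0, h1⟩⟩
    apply ciSup_le
    intro i
    calc |Y i j0| ≤ ⨆ j, |Y i j| := le_ciSup (f := fun j => |Y i j|) (Finite.bddAbove_range _) j0
      _ ≤ ⨆ i, ⨆ j, |Y i j| := le_ciSup (Finite.bddAbove_range fun i => ⨆ j, |Y i j|) i
end
end

section
/- Uniform bounds for Sinkhorn iterates in classical OT: consider the entropic OT problem with probability marginals b_1, b_2 with min(b) > 0, cost C >= 0 entrywise with min(C) = 0, reference z = b_1 ⊗ b_2, temperature gamma > 0, and Sinkhorn dual iterates initialized at u^{(0)} = 0. Then one may take the primal bound X = 1 (i.e., all primal iterates P^{(k)} satisfy ||P^{(k)}||_1 <= 1) and the dual bound U = 4*||C||_inf + 2*gamma*|log(min(b))| (i.e., sup_k ||u^{(k)}||_V <= U). -/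
/-!
STATEMENT 10: Uniform bounds for Sinkhorn iterates in classical OT: the primal
iterates satisfy `‖P^{(k)}‖₁ ≤ 1` and the dual iterates satisfy
`‖u^{(k)}‖_V ≤ 4 ‖C‖_∞ + 2 γ |log(min b)|`, where `‖u‖_V` is the max of the
variation seminorms of the two blocks.
-/

noncomputable section

open Real

/-- If all pairwise differences of `f` are bounded by `M`, then sup minus inf is
bounded by `M`. -/
lemma sup_sub_inf_le_of_pairwise {n : ℕ} (hn : 0 < n) (f : Fin n → ℝ) {M : ℝ}
    (h : ∀ i i', f i - f i' ≤ M) : (⨆ i, f i) - (⨅ i, f i) ≤ M := by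
  haveI : Nonempty (Fin n) := Fin.pos_iff_nonempty.mp hn
  rw [sub_le_iff_le_add]
  apply ciSup_le
  intro i
  have hinf : f i - M ≤ ⨅ i', f i' := le_ciInf fun i' => by linarith [h i i']
  linarith

theorem sinkhorn_uniform_bounds
    {m1 m2 : ℕ} (hm1 : 0 < m1) (hm2 : 0 < m2)
    (b1 : Fin m1 → ℝ) (b2 : Fin m2 → ℝ)
    (C : Matrix (Fin m1) (Fin m2) ℝ) (γ : ℝ) (hγ : 0 < γ)
    (hb1 : ∀ i, 0 < b1 i) (hb2 : ∀ j, 0 < b2 j)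
    (hb1sum : ∑ i, b1 i = 1) (hb2sum : ∑ j, b2 j = 1)
    (hC : ∀ i j, 0 ≤ C i j) (hC0 : ∃ i j, C i j = 0)
    -- Sinkhorn dual iterates, initialized at u^{(0)} = 0
    (u1seq : ℕ → Fin m1 → ℝ) (u2seq : ℕ → Fin m2 → ℝ)
    (hinit1 : u1seq 0 = 0) (hinit2 : u2seq 0 = 0)
    (hrec1 : ∀ k i, u1seq (k + 1) i
        = -γ * Real.log (∑ j, Real.exp ((-C i j + u2seq k j) / γ) * b2 j))
    (hrec2 : ∀ k j, u2seq (k + 1) j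
        = -γ * Real.log (∑ i, Real.exp ((-C i j + u1seq (k + 1) i) / γ) * b1 i))
    -- primal iterates
    (P : ℕ → Matrix (Fin m1) (Fin m2) ℝ)
    (hP : ∀ k i j, P k i j
        = b1 i * b2 j * Real.exp ((u1seq k i + u2seq k j - C i j) / γ)) :
    -- primal bound X = 1
    (∀ k, (∑ i, ∑ j, |P k i j|) ≤ 1)
    ∧
    -- dual bound U = 4‖C‖_∞ + 2γ|log(min b)|
    (∀ k,
      max (((⨆ i, u1seq k i) - ⨅ i, u1seq k i) / 2)
          (((⨆ j, u2seq k j) - ⨅ j, u2seq k j) / 2)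
        ≤ 4 * (⨆ i, ⨆ j, |C i j|)
          + 2 * γ * |Real.log (min (⨅ i, b1 i) (⨅ j, b2 j))|) := by
  haveI : Nonempty (Fin m1) := Fin.pos_iff_nonempty.mp hm1
  haveI : Nonempty (Fin m2) := Fin.pos_iff_nonempty.mp hm2
  have hγ' : γ ≠ 0 := ne_of_gt hγ
  set M : ℝ := ⨆ i, ⨆ j, |C i j| with hMdef
  -- C i j ≤ M
  have hCM : ∀ i j, C i j ≤ M := by
    intro i j
    have h1 : |C i j| ≤ ⨆ j, |C i j| :=
      le_ciSup (f := fun j => |C i j|) (Set.Finite.bddAbove (Set.finite_range _)) j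
    have h2 : (⨆ j, |C i j|) ≤ M :=
      le_ciSup (f := fun i => ⨆ j, |C i j|) (Set.Finite.bddAbove (Set.finite_range _)) i
    exact (le_abs_self _).trans (h1.trans h2)
  have hM0 : 0 ≤ M := by
    obtain ⟨i, j, hij⟩ := hC0
    have := hCM i j
    linarith
  -- positivity of the two kinds of Sinkhorn sums
  have hS1 : ∀ (k : ℕ) (i : Fin m1),
      0 < ∑ j, Real.exp ((-C i j + u2seq k j) / γ) * b2 j := fun k i =>
    Finset.sum_pos (fun j _ => mul_pos (Real.exp_pos _) (hb2 j)) Finset.univ_nonempty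
  have hS2 : ∀ (k : ℕ) (j : Fin m2),
      0 < ∑ i, Real.exp ((-C i j + u1seq (k + 1) i) / γ) * b1 i := fun k j =>
    Finset.sum_pos (fun i _ => mul_pos (Real.exp_pos _) (hb1 i)) Finset.univ_nonempty
  -- pairwise variation bounds
  have hvar1 : ∀ k i i', u1seq k i - u1seq k i' ≤ M := by
    intro k i i'
    cases k with
    | zero => simp [hinit1, hM0]
    | succ k =>
      have hle : (∑ j, Real.exp ((-C i' j + u2seq k j) / γ) * b2 j)
          ≤ Real.exp (M / γ) * ∑ j, Real.exp ((-C i j + u2seq k j) / γ) * b2 j := by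
        rw [Finset.mul_sum]
        refine Finset.sum_le_sum fun j _ => ?_
        rw [← mul_assoc, ← Real.exp_add]
        refine mul_le_mul_of_nonneg_right (Real.exp_le_exp.mpr ?_) (hb2 j).le
        rw [← add_div]
        exact (div_le_div_iff_of_pos_right hγ).mpr (by linarith [hCM i j, hC i' j])
      have hlog : Real.log (∑ j, Real.exp ((-C i' j + u2seq k j) / γ) * b2 j)
          ≤ M / γ + Real.log (∑ j, Real.exp ((-C i j + u2seq k j) / γ) * b2 j) := by
        have := Real.log_le_log (hS1 k i') hle
        rwa [Real.log_mul (Real.exp_pos _).ne' (hS1 k i).ne', Real.log_exp] at this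
      rw [hrec1, hrec1]
      have h2 : γ * (Real.log (∑ j, Real.exp ((-C i' j + u2seq k j) / γ) * b2 j)
          - Real.log (∑ j, Real.exp ((-C i j + u2seq k j) / γ) * b2 j)) ≤ γ * (M / γ) :=
        mul_le_mul_of_nonneg_left (by linarith) hγ.le
      rw [mul_div_cancel₀ M hγ'] at h2
      linarith
  have hvar2 : ∀ k j j', u2seq k j - u2seq k j' ≤ M := by
    intro k j j'
    cases k with
    | zero => simp [hinit2, hM0]
    | succ k =>
      have hle : (∑ i, Real.exp ((-C i j' + u1seq (k + 1) i) / γ) * b1 i)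
          ≤ Real.exp (M / γ) * ∑ i, Real.exp ((-C i j + u1seq (k + 1) i) / γ) * b1 i := by
        rw [Finset.mul_sum]
        refine Finset.sum_le_sum fun i _ => ?_
        rw [← mul_assoc, ← Real.exp_add]
        refine mul_le_mul_of_nonneg_right (Real.exp_le_exp.mpr ?_) (hb1 i).le
        rw [← add_div]
        exact (div_le_div_iff_of_pos_right hγ).mpr (by linarith [hCM i j, hC i j'])
      have hlog : Real.log (∑ i, Real.exp ((-C i j' + u1seq (k + 1) i) / γ) * b1 i)
          ≤ M / γ + Real.log (∑ i, Real.exp ((-C i j + u1seq (k + 1) i) / γ) * b1 i) := by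
        have := Real.log_le_log (hS2 k j') hle
        rwa [Real.log_mul (Real.exp_pos _).ne' (hS2 k j).ne', Real.log_exp] at this
      rw [hrec2, hrec2]
      have h2 : γ * (Real.log (∑ i, Real.exp ((-C i j' + u1seq (k + 1) i) / γ) * b1 i)
          - Real.log (∑ i, Real.exp ((-C i j + u1seq (k + 1) i) / γ) * b1 i)) ≤ γ * (M / γ) :=
        mul_le_mul_of_nonneg_left (by linarith) hγ.le
      rw [mul_div_cancel₀ M hγ'] at h2
      linarith
  constructor
  · -- primal bound
    intro k
    cases k with
    | zero =>
      have hterm : ∀ i j, |P 0 i j| ≤ b1 i * b2 j := by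
        intro i j
        have hpos : 0 < P 0 i j := by
          rw [hP]; exact mul_pos (mul_pos (hb1 i) (hb2 j)) (Real.exp_pos _)
        rw [abs_of_pos hpos, hP]
        have hx : (u1seq 0 i + u2seq 0 j - C i j) / γ ≤ 0 := by
          apply div_nonpos_of_nonpos_of_nonneg _ hγ.le
          have h1 : u1seq 0 i = 0 := by rw [hinit1]; rfl
          have h2 : u2seq 0 j = 0 := by rw [hinit2]; rfl
          rw [h1, h2]
          linarith [hC i j]
        have he : Real.exp ((u1seq 0 i + u2seq 0 j - C i j) / γ) ≤ 1 :=
          Real.exp_le_one_iff.mpr hx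
        nlinarith [mul_pos (hb1 i) (hb2 j)]
      calc ∑ i, ∑ j, |P 0 i j| ≤ ∑ i, ∑ j, b1 i * b2 j := by
            refine Finset.sum_le_sum fun i _ => Finset.sum_le_sum fun j _ => hterm i j
        _ = (∑ i, b1 i) * (∑ j, b2 j) := by
            rw [Finset.sum_mul_sum]
        _ = 1 := by rw [hb1sum, hb2sum]; ring
    | succ k =>
      have key : ∀ j, (∑ i, |P (k + 1) i j|) = b2 j := by
        intro j
        have hexp : Real.exp (-(u2seq (k + 1) j) / γ)
            = ∑ i, Real.exp ((-C i j + u1seq (k + 1) i) / γ) * b1 i := by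
          rw [hrec2 k j]
          have harg : -(-γ * Real.log (∑ i, Real.exp ((-C i j + u1seq (k + 1) i) / γ) * b1 i)) / γ
              = Real.log (∑ i, Real.exp ((-C i j + u1seq (k + 1) i) / γ) * b1 i) := by
            field_simp
          rw [harg, Real.exp_log (hS2 k j)]
        calc (∑ i, |P (k + 1) i j|)
            = ∑ i, b2 j * Real.exp (u2seq (k + 1) j / γ)
                * (Real.exp ((-C i j + u1seq (k + 1) i) / γ) * b1 i) := by
              refine Finset.sum_congr rfl fun i _ => ?_
              rw [hP, abs_of_pos (mul_pos (mul_pos (hb1 i) (hb2 j)) (Real.exp_pos _))]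
              rw [show (u1seq (k + 1) i + u2seq (k + 1) j - C i j) / γ
                  = u2seq (k + 1) j / γ + (-C i j + u1seq (k + 1) i) / γ by ring,
                Real.exp_add]
              ring
          _ = b2 j * Real.exp (u2seq (k + 1) j / γ)
                * ∑ i, Real.exp ((-C i j + u1seq (k + 1) i) / γ) * b1 i := by
              rw [Finset.mul_sum]
          _ = b2 j := by
              rw [← hexp, mul_assoc, ← Real.exp_add]
              rw [show u2seq (k + 1) j / γ + -(u2seq (k + 1) j) / γ = 0 by ring,
                Real.exp_zero, mul_one]
      rw [Finset.sum_comm]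
      have : (∑ j, ∑ i, |P (k + 1) i j|) = 1 := by
        rw [Finset.sum_congr rfl fun j _ => key j, hb2sum]
      exact this.le
  · -- dual bound
    intro k
    have hL : 0 ≤ |Real.log (min (⨅ i, b1 i) (⨅ j, b2 j))| := abs_nonneg _
    have h1 : ((⨆ i, u1seq k i) - ⨅ i, u1seq k i) ≤ M :=
      sup_sub_inf_le_of_pairwise hm1 _ (hvar1 k)
    have h2 : ((⨆ j, u2seq k j) - ⨅ j, u2seq k j) ≤ M :=
      sup_sub_inf_le_of_pairwise hm2 _ (hvar2 k)
    apply max_le <;> nlinarith [mul_nonneg hγ.le hL]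
end
end

section
/- Closed-form KL projections for the lifted flow problem: let G be a connected graph on n vertices with edge set E, and let f, g, h be positive flows (matrices in R^{n x n}_{+} supported on E, with positive entries on E). Then (1) the KL projection of (h,h) onto C_1 := {(f,g) : -f*1 + g^T*1 = b_1 - b_2} is (diag(s)*h, h*diag(s)^{-1}), where s in R^n_{++} is given componentwise by s = phi((b_1 - b_2)/(h*1), (h^T*1)/(h*1)) with phi(t,u) := (sqrt(t^2 + 4u) - t)/2; equivalently, s is the positive root of (s ⊙ s) ⊙ (h*1) + s ⊙ (b_1 - b_2) - h^T*1 = 0. (2) The KL projection of (f,g) onto C_2 := {(f,g) : f = g} is (sqrt(f ⊙ g), sqrt(f ⊙ g)), the entrywise geometric mean. -/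
/-!
STATEMENT 11: Closed-form KL projections for the lifted flow problem:
(1) the KL projection of `(h,h)` onto
`C₁ = {(f,g) : -f·1 + gᵀ·1 = b₁ - b₂}` is `(diag(s)h, h diag(s)⁻¹)` with `s`
given by the explicit positive root of a quadratic, and
(2) the KL projection of `(f,g)` onto `C₂ = {(f,g) : f = g}` is the entrywise
geometric mean.
-/

noncomputable section

open Real

lemma klaux {x y : ℝ} (hx : 0 < x) (hy : 0 < y) : x - y ≤ x * Real.log (x / y) := by
  have h := Real.log_le_sub_one_of_pos (show 0 < y / x by positivity)
  have h2 : Real.log (y / x) = - Real.log (x / y) := by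
    rw [← Real.log_inv]; congr 1; field_simp
  have h3 : x * Real.log (y / x) ≤ x * (y / x - 1) :=
    mul_le_mul_of_nonneg_left h hx.le
  have h4 : x * (y / x - 1) = y - x := by field_simp
  rw [h2] at h3; nlinarith

lemma kl_tangent {x y H : ℝ} (hx : 0 ≤ x) (hy : 0 < y) (hH : 0 < H) :
    y * Real.log (y / H) - y + H + Real.log (y / H) * (x - y)
      ≤ x * Real.log (x / H) - x + H := by
  rcases hx.eq_or_lt with h | h
  · simp [← h]; nlinarith
  · have h1 : Real.log (x / H) = Real.log x - Real.log H := Real.log_div h.ne' hH.ne'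
    have h2 : Real.log (y / H) = Real.log y - Real.log H := Real.log_div hy.ne' hH.ne'
    have h3 : Real.log (x / y) = Real.log x - Real.log y := Real.log_div h.ne' hy.ne'
    have := klaux h hy
    rw [h3] at this
    rw [h1, h2]; nlinarith

lemma part2_pt {q f g : ℝ} (hq : 0 ≤ q) (hf : 0 < f) (hg : 0 < g) :
    (Real.sqrt (f*g) * Real.log (Real.sqrt (f*g)/f) - Real.sqrt (f*g) + f)
      + (Real.sqrt (f*g) * Real.log (Real.sqrt (f*g)/g) - Real.sqrt (f*g) + g)
    ≤ (q * Real.log (q/f) - q + f) + (q * Real.log (q/g) - q + g) := by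
  set m := Real.sqrt (f*g) with hm
  have hmpos : 0 < m := Real.sqrt_pos.mpr (by positivity)
  have hm2 : m ^ 2 = f * g := Real.sq_sqrt (by positivity)
  have hlm : Real.log m = (Real.log f + Real.log g) / 2 := by
    rw [hm, Real.log_sqrt (by positivity), Real.log_mul hf.ne' hg.ne']
  have e1 : Real.log (m / f) = Real.log m - Real.log f := Real.log_div hmpos.ne' hf.ne'
  have e2 : Real.log (m / g) = Real.log m - Real.log g := Real.log_div hmpos.ne' hg.ne'
  rcases hq.eq_or_lt with h | h
  · simp [← h]; nlinarith
  · have e3 : Real.log (q / f) = Real.log q - Real.log f := Real.log_div h.ne' hf.ne'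
    have e4 : Real.log (q / g) = Real.log q - Real.log g := Real.log_div h.ne' hg.ne'
    have e5 : Real.log (q / m) = Real.log q - Real.log m := Real.log_div h.ne' hmpos.ne'
    have := klaux h hmpos
    rw [e5] at this
    rw [e1, e2, e3, e4]; nlinarith

theorem flow_closed_form_KL_projections
    {n : ℕ} (G : SimpleGraph (Fin n)) [DecidableRel G.Adj]
    (hconn : G.Connected) (hn : 2 ≤ n)
    (b1 b2 : Fin n → ℝ)
    (hb1 : ∀ i, 0 ≤ b1 i) (hb2 : ∀ i, 0 ≤ b2 i)
    (hb1sum : ∑ i, b1 i = 1) (hb2sum : ∑ i, b2 i = 1)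
    -- KL divergence between pairs of flows (sums over edges)
    (KL2 : ((Fin n → Fin n → ℝ) × (Fin n → Fin n → ℝ)) →
           ((Fin n → Fin n → ℝ) × (Fin n → Fin n → ℝ)) → ℝ)
    (hKL2 : ∀ p q, KL2 p q
        = (∑ i, ∑ j, if G.Adj i j then
            (p.1 i j * Real.log (p.1 i j / q.1 i j) - p.1 i j + q.1 i j) else 0)
        + (∑ i, ∑ j, if G.Adj i j then
            (p.2 i j * Real.log (p.2 i j / q.2 i j) - p.2 i j + q.2 i j) else 0))
    -- h, f, g : positive flows supported on the edge set
    (h f g : Fin n → Fin n → ℝ)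
    (hh0 : ∀ i j, ¬ G.Adj i j → h i j = 0) (hhpos : ∀ i j, G.Adj i j → 0 < h i j)
    (hf0 : ∀ i j, ¬ G.Adj i j → f i j = 0) (hfpos : ∀ i j, G.Adj i j → 0 < f i j)
    (hg0 : ∀ i j, ¬ G.Adj i j → g i j = 0) (hgpos : ∀ i j, G.Adj i j → 0 < g i j)
    -- the scaling vector s = φ((b₁-b₂)/(h·1), (hᵀ·1)/(h·1)), φ(t,u) = (√(t²+4u)-t)/2
    (s : Fin n → ℝ)
    (hs : ∀ i, s i
        = (Real.sqrt (((b1 i - b2 i) / ∑ j, h i j) ^ 2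
              + 4 * ((∑ j, h j i) / ∑ j, h i j))
            - (b1 i - b2 i) / ∑ j, h i j) / 2) :
    -- (1) projection onto C₁
    ((∀ i, 0 < s i)
      -- s is the positive root of the quadratic
      ∧ (∀ i, s i ^ 2 * (∑ j, h i j) + s i * (b1 i - b2 i) - (∑ j, h j i) = 0)
      -- (diag(s)h, h diag(s)⁻¹) belongs to C₁
      ∧ (∀ i, -(∑ j, s i * h i j) + (∑ j, h j i / s i) = b1 i - b2 i)
      -- and it minimizes KL(·|(h,h)) over C₁
      ∧ (∀ f' g' : Fin n → Fin n → ℝ,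
          (∀ i j, ¬ G.Adj i j → f' i j = 0) → (∀ i j, 0 ≤ f' i j) →
          (∀ i j, ¬ G.Adj i j → g' i j = 0) → (∀ i j, 0 ≤ g' i j) →
          (∀ i, -(∑ j, f' i j) + (∑ j, g' j i) = b1 i - b2 i) →
          KL2 ((fun i j => s i * h i j), (fun i j => h i j / s j)) (h, h)
            ≤ KL2 (f', g') (h, h)))
    ∧
    -- (2) projection onto C₂ is the entrywise geometric mean
    (∀ q : Fin n → Fin n → ℝ,
        (∀ i j, ¬ G.Adj i j → q i j = 0) → (∀ i j, 0 ≤ q i j) →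
        KL2 ((fun i j => Real.sqrt (f i j * g i j)),
             (fun i j => Real.sqrt (f i j * g i j))) (f, g)
          ≤ KL2 (q, q) (f, g)) := by
  -- every vertex has a neighbour
  have hnb : ∀ i : Fin n, ∃ j, G.Adj i j := by
    intro i
    have : Nontrivial (Fin n) := Fin.nontrivial_iff_two_le.mpr hn
    obtain ⟨j, hj⟩ := exists_ne i
    obtain ⟨w⟩ := hconn.preconnected i j
    cases w with
    | nil => exact absurd rfl hj
    | cons ha _ => exact ⟨_, ha⟩
  have hhnn : ∀ i j, 0 ≤ h i j := by
    intro i j; by_cases hij : G.Adj i j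
    · exact (hhpos i j hij).le
    · simp [hh0 i j hij]
  have hR : ∀ i, 0 < ∑ j, h i j := by
    intro i
    obtain ⟨j, hj⟩ := hnb i
    exact Finset.sum_pos' (fun k _ => hhnn i k) ⟨j, Finset.mem_univ j, hhpos i j hj⟩
  have hC : ∀ i, 0 < ∑ j, h j i := by
    intro i
    obtain ⟨j, hj⟩ := hnb i
    exact Finset.sum_pos' (fun k _ => hhnn k i) ⟨j, Finset.mem_univ j, hhpos j i hj.symm⟩
  have hspos : ∀ i, 0 < s i := by
    intro i
    rw [hs i]
    have hu : 0 < (∑ j, h j i) / ∑ j, h i j := div_pos (hC i) (hR i)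
    set t := (b1 i - b2 i) / ∑ j, h i j with ht
    have h1 : t < Real.sqrt (t^2 + 4 * ((∑ j, h j i) / ∑ j, h i j)) := by
      have h2 : Real.sqrt (t^2) < Real.sqrt (t^2 + 4 * ((∑ j, h j i) / ∑ j, h i j)) :=
        Real.sqrt_lt_sqrt (sq_nonneg t) (by linarith)
      calc t ≤ |t| := le_abs_self t
        _ = Real.sqrt (t^2) := (Real.sqrt_sq_eq_abs t).symm
        _ < _ := h2
    linarith
  have hquad : ∀ i, s i ^ 2 * (∑ j, h i j) + s i * (b1 i - b2 i) - (∑ j, h j i) = 0 := by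
    intro i
    set t := (b1 i - b2 i) / ∑ j, h i j with ht
    set u := (∑ j, h j i) / ∑ j, h i j with hu
    have hune : 0 < u := div_pos (hC i) (hR i)
    have hd : 0 ≤ t^2 + 4*u := by nlinarith [sq_nonneg t]
    have hsq : Real.sqrt (t^2+4*u) ^ 2 = t^2+4*u := Real.sq_sqrt hd
    have hsi : s i = (Real.sqrt (t^2+4*u) - t)/2 := hs i
    have key : s i ^ 2 + t * s i - u = 0 := by rw [hsi]; nlinarith [hsq]
    have hRne : (∑ j, h i j) ≠ 0 := (hR i).ne'
    have h1 : t * (∑ j, h i j) = b1 i - b2 i := by rw [ht]; field_simp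
    have h2 : u * (∑ j, h i j) = ∑ j, h j i := by rw [hu]; field_simp
    have k2 : (s i ^ 2 + t * s i - u) * (∑ j, h i j) = 0 := by rw [key]; ring
    linear_combination k2 - s i * h1 + h2
  have hcons' : ∀ i, -(s i * ∑ j, h i j) + (∑ j, h j i) / s i = b1 i - b2 i := by
    intro i
    have hsne : s i ≠ 0 := (hspos i).ne'
    have hq := hquad i
    have hfac : (-(s i * ∑ j, h i j) + (∑ j, h j i) / s i - (b1 i - b2 i)) * s i
        = -(s i ^ 2 * (∑ j, h i j) + s i * (b1 i - b2 i) - (∑ j, h j i)) := by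
      field_simp; ring
    rw [hq, neg_zero] at hfac
    rcases mul_eq_zero.mp hfac with h0 | h0
    · linarith
    · exact absurd h0 hsne
  have hcons : ∀ i, -(∑ j, s i * h i j) + (∑ j, h j i / s i) = b1 i - b2 i := by
    intro i
    rw [← Finset.mul_sum, ← Finset.sum_div]
    exact hcons' i
  refine ⟨⟨hspos, hquad, hcons, ?_⟩, ?_⟩
  · -- optimality over C₁
    intro f' g' hf'0 hf'nn hg'0 hg'nn hfeas
    rw [hKL2, hKL2]
    dsimp only
    set D1 := ∑ i, ∑ j, (if G.Adj i j then Real.log (s i) * (f' i j - s i * h i j) else 0)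
      with hD1
    set D2 := ∑ i, ∑ j, (if G.Adj i j then (- Real.log (s j)) * (g' i j - h i j / s j) else 0)
      with hD2
    have step1 :
        (∑ i, ∑ j, if G.Adj i j then
            (s i * h i j * Real.log (s i * h i j / h i j) - s i * h i j + h i j) else 0)
          + D1
        ≤ ∑ i, ∑ j, if G.Adj i j then
            (f' i j * Real.log (f' i j / h i j) - f' i j + h i j) else 0 := by
      rw [hD1, ← Finset.sum_add_distrib]
      apply Finset.sum_le_sum
      intro i _
      rw [← Finset.sum_add_distrib]
      apply Finset.sum_le_sum
      intro j _
      by_cases hij : G.Adj i j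
      · simp only [if_pos hij]
        have hH := hhpos i j hij
        have hy : 0 < s i * h i j := mul_pos (hspos i) hH
        have hlog : Real.log (s i * h i j / h i j) = Real.log (s i) := by
          rw [mul_div_assoc, div_self hH.ne', mul_one]
        have := kl_tangent (hf'nn i j) hy hH
        rw [hlog] at this ⊢
        linarith
      · simp [hij]
    have step2 :
        (∑ i, ∑ j, if G.Adj i j then
            (h i j / s j * Real.log (h i j / s j / h i j) - h i j / s j + h i j) else 0)
          + D2
        ≤ ∑ i, ∑ j, if G.Adj i j then
            (g' i j * Real.log (g' i j / h i j) - g' i j + h i j) else 0 := by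
      rw [hD2, ← Finset.sum_add_distrib]
      apply Finset.sum_le_sum
      intro i _
      rw [← Finset.sum_add_distrib]
      apply Finset.sum_le_sum
      intro j _
      by_cases hij : G.Adj i j
      · simp only [if_pos hij]
        have hH := hhpos i j hij
        have hy : 0 < h i j / s j := div_pos hH (hspos j)
        have hlog : Real.log (h i j / s j / h i j) = - Real.log (s j) := by
          rw [show h i j / s j / h i j = (s j)⁻¹ by rw [div_div, mul_comm (s j) (h i j), ← div_div, div_self hH.ne', one_div], Real.log_inv]
        have := kl_tangent (hg'nn i j) hy hH
        rw [hlog] at this ⊢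
        linarith
      · simp [hij]
    have hDzero : D1 + D2 = 0 := by
      have e1 : D1 = ∑ i, Real.log (s i) * ((∑ j, f' i j) - s i * ∑ j, h i j) := by
        rw [hD1]
        apply Finset.sum_congr rfl
        intro i _
        have hterm : ∀ j, (if G.Adj i j then Real.log (s i) * (f' i j - s i * h i j) else 0)
            = Real.log (s i) * (f' i j - s i * h i j) := by
          intro j
          split
          · rfl
          · rename_i hij; simp [hf'0 i j hij, hh0 i j hij]
        rw [Finset.sum_congr rfl (fun j _ => hterm j), ← Finset.mul_sum,
          Finset.sum_sub_distrib, ← Finset.mul_sum]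
      have e2 : D2 = ∑ i, (- Real.log (s i)) * ((∑ j, g' j i) - (∑ j, h j i) / s i) := by
        rw [hD2, Finset.sum_comm]
        apply Finset.sum_congr rfl
        intro i _
        have hterm : ∀ j, (if G.Adj j i then (- Real.log (s i)) * (g' j i - h j i / s i) else 0)
            = (- Real.log (s i)) * (g' j i - h j i / s i) := by
          intro j
          split
          · rfl
          · rename_i hij; simp [hg'0 j i hij, hh0 j i hij]
        rw [Finset.sum_congr rfl (fun j _ => hterm j), ← Finset.mul_sum,
          Finset.sum_sub_distrib, ← Finset.sum_div]
      rw [e1, e2, ← Finset.sum_add_distrib]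
      apply Finset.sum_eq_zero
      intro i _
      have h1 := hfeas i
      have h2 := hcons' i
      linear_combination (- Real.log (s i)) * h1 + Real.log (s i) * h2
    linarith
  · -- part (2)
    intro q hq0 hqnn
    rw [hKL2, hKL2]
    dsimp only
    rw [← Finset.sum_add_distrib, ← Finset.sum_add_distrib]
    apply Finset.sum_le_sum
    intro i _
    rw [← Finset.sum_add_distrib, ← Finset.sum_add_distrib]
    apply Finset.sum_le_sum
    intro j _
    by_cases hij : G.Adj i j
    · simp only [if_pos hij]
      exact part2_pt (hqnn i j) (hfpos i j hij) (hgpos i j hij)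
    · simp [hij]
end
end

section
/- Closed forms for the block-quotient seminorms of the flow split: let G be a connected graph on n vertices with edge set E, and consider the split A_1(f,g) := f*1 - g^T*1 in R^n and A_2(f,g) := f - g on flows. Then ker(A^T) = { (c*1_n, -c*1_E) : c in R }, where A^T(v,U) = ((v_i + U_{ij})_{(i,j) in E}, (-v_j - U_{ij})_{(i,j) in E}). Consequently, the block-quotient seminorms both equal the variation seminorm: ||v||_{V_1} = inf_{c in R} ||v + c*1_n||_inf = (max(v) - min(v))/2 for v in R^n, and ||U||_{V_2} = inf_{c in R} ||U - c*1_E||_inf for U supported on E. -/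
/-!
STATEMENT 12: Closed forms for the block-quotient seminorms of the flow split:
`ker(Aᵀ) = {(c·1_n, -c·1_E) : c ∈ ℝ}`, and consequently the block-quotient
seminorms equal the variation seminorms:
`‖v‖_{V₁} = inf_c ‖v + c·1‖_∞ = (max v - min v)/2` and
`‖U‖_{V₂} = inf_c ‖U - c·1_E‖_∞`.
-/

noncomputable section

open Real

theorem flow_block_quotient_seminorms
    {n : ℕ} (G : SimpleGraph (Fin n)) [DecidableRel G.Adj]
    (hconn : G.Connected)
    -- the kernel of Aᵀ for the flow split
    (K : Set ((Fin n → ℝ) × (Fin n → Fin n → ℝ)))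
    (hK : K = {p | (∀ i j, ¬ G.Adj i j → p.2 i j = 0)
        ∧ (∀ i j, G.Adj i j → p.1 i + p.2 i j = 0)
        ∧ (∀ i j, G.Adj i j → -p.1 j - p.2 i j = 0)}) :
    -- ker(Aᵀ) = {(c·1, -c·1_E)}
    (K = {p | ∃ c : ℝ, p.1 = (fun _ => c)
        ∧ p.2 = fun i j => if G.Adj i j then -c else 0})
    ∧
    -- ‖v‖_{V₁} = inf_c ‖v + c·1‖_∞ = (max v - min v)/2
    (∀ v : Fin n → ℝ,
      sInf {r : ℝ | ∃ p ∈ K, r = ⨆ i, |v i + p.1 i|}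
        = ((⨆ i, v i) - ⨅ i, v i) / 2)
    ∧ (∀ v : Fin n → ℝ,
      sInf {r : ℝ | ∃ c : ℝ, r = ⨆ i, |v i + c|}
        = ((⨆ i, v i) - ⨅ i, v i) / 2)
    ∧
    -- ‖U‖_{V₂} = inf_c ‖U - c·1_E‖_∞ for U supported on E
    (∀ U : Fin n → Fin n → ℝ, (∀ i j, ¬ G.Adj i j → U i j = 0) →
      sInf {r : ℝ | ∃ p ∈ K, r = ⨆ i, ⨆ j, |U i j + p.2 i j|}
        = sInf {r : ℝ | ∃ c : ℝ,
            r = ⨆ i, ⨆ j, |U i j - c * (if G.Adj i j then 1 else 0)|}) := by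
  have hne : Nonempty (Fin n) := hconn.nonempty
  haveI := hne
  -- Part 1: identification of the kernel
  have hKeq : K = {p | ∃ c : ℝ, p.1 = (fun _ => c)
      ∧ p.2 = fun i j => if G.Adj i j then -c else 0} := by
    rw [hK]; ext p
    simp only [Set.mem_setOf_eq]
    constructor
    · rintro ⟨h0, h1, h2⟩
      obtain ⟨i0⟩ := hne
      have hadj : ∀ i j, G.Adj i j → p.1 i = p.1 j := by
        intro i j hij
        have a := h1 i j hij
        have b := h2 i j hij
        linarith
      have hconst : ∀ i, p.1 i = p.1 i0 := by
        intro i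
        obtain ⟨w⟩ := hconn.preconnected i i0
        induction w with
        | nil => rfl
        | cons h w ih => rw [hadj _ _ h]; exact ih
      refine ⟨p.1 i0, funext hconst, funext fun i => funext fun j => ?_⟩
      by_cases hij : G.Adj i j
      · have := h1 i j hij
        rw [if_pos hij, ← hconst i]; linarith
      · rw [if_neg hij]; exact h0 i j hij
    · rintro ⟨c, h1, h2⟩
      refine ⟨?_, ?_, ?_⟩ <;> intro i j hij <;> simp [h1, h2, hij]
  have hbdd : ∀ w : Fin n → ℝ, BddAbove (Set.range w) :=
    fun w => (Set.finite_range w).bddAbove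
  -- Key computation
  have key : ∀ v : Fin n → ℝ,
      sInf {r : ℝ | ∃ c : ℝ, r = ⨆ i, |v i + c|}
        = ((⨆ i, v i) - ⨅ i, v i) / 2 := by
    intro v
    obtain ⟨iM, hiM⟩ := Finite.exists_max v
    obtain ⟨im, him⟩ := Finite.exists_min v
    have hM : (⨆ i, v i) = v iM :=
      le_antisymm (ciSup_le hiM) (le_ciSup (hbdd v) iM)
    have hm : (⨅ i, v i) = v im :=
      le_antisymm (ciInf_le (Set.finite_range v).bddBelow im) (le_ciInf him)
    rw [hM, hm]
    apply IsLeast.csInf_eq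
    constructor
    · refine ⟨-(v iM + v im)/2, le_antisymm ?_ ?_⟩
      swap
      · apply ciSup_le
        intro i
        rw [abs_le]
        constructor
        · have := him i; linarith
        · have := hiM i; linarith
      · have habs : |v iM + -(v iM + v im)/2| = (v iM - v im)/2 := by
          rw [abs_of_nonneg (by have := him iM; linarith)]; ring
        calc (v iM - v im)/2 = |v iM + -(v iM + v im)/2| := habs.symm
          _ ≤ ⨆ i, |v i + -(v iM + v im)/2| := le_ciSup (f := fun i => |v i + -(v iM + v im)/2|) (hbdd _) iM
    · rintro r ⟨c, rfl⟩
      have h1 : |v iM + c| ≤ ⨆ i, |v i + c| :=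
        le_ciSup (f := fun i => |v i + c|) (hbdd _) iM
      have h2 : |v im + c| ≤ ⨆ i, |v i + c| :=
        le_ciSup (f := fun i => |v i + c|) (hbdd _) im
      have h3 : v iM + c ≤ |v iM + c| := le_abs_self _
      have h4 : -(v im + c) ≤ |v im + c| := neg_le_abs _
      linarith
  -- pointwise identity used in part 4
  have hpt : ∀ (U : Fin n → Fin n → ℝ) (c : ℝ) (i j : Fin n),
      |U i j + (if G.Adj i j then -c else 0)|
        = |U i j - c * (if G.Adj i j then 1 else 0)| := by
    intro U c i j; by_cases h : G.Adj i j <;> simp [h, sub_eq_add_neg]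
  refine ⟨hKeq, fun v => ?_, key, fun U hU => ?_⟩
  · have hset : {r : ℝ | ∃ p ∈ K, r = ⨆ i, |v i + p.1 i|}
        = {r : ℝ | ∃ c : ℝ, r = ⨆ i, |v i + c|} := by
      ext r
      simp only [Set.mem_setOf_eq, hKeq]
      constructor
      · rintro ⟨p, ⟨c, h1, h2⟩, rfl⟩
        exact ⟨c, by rw [h1]⟩
      · rintro ⟨c, rfl⟩
        exact ⟨(fun _ => c, fun i j => if G.Adj i j then -c else 0), ⟨c, rfl, rfl⟩, rfl⟩
    rw [hset]; exact key v
  · have hset : {r : ℝ | ∃ p ∈ K, r = ⨆ i, ⨆ j, |U i j + p.2 i j|}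
        = {r : ℝ | ∃ c : ℝ,
            r = ⨆ i, ⨆ j, |U i j - c * (if G.Adj i j then 1 else 0)|} := by
      ext r
      simp only [Set.mem_setOf_eq, hKeq]
      constructor
      · rintro ⟨p, ⟨c, h1, h2⟩, rfl⟩
        refine ⟨c, ?_⟩
        rw [h2]
        exact iSup_congr fun i => iSup_congr fun j => hpt U c i j
      · rintro ⟨c, rfl⟩
        refine ⟨(fun _ => c, fun i j => if G.Adj i j then -c else 0), ⟨c, rfl, rfl⟩, ?_⟩
        exact (iSup_congr fun i => iSup_congr fun j => hpt U c i j).symm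
    rw [hset]
end
end

section
/- H_gamma bound for flow Sinkhorn: let G be a connected graph with edge weights W satisfying 0 < W_min := min_{(i,j) in E} W_{ij} and W_max := max_{(i,j) in E} W_{ij}, reference z in R^E_{++}, gamma > 0, probability vectors b_1, b_2, and let f_gamma be the minimizer of min{ <W,f> + gamma*KL(f|z) : f a positive flow on E with div(f) = b_1 - b_2 }. Fix any feasible flow fbar >= 0 with div(fbar) = b_1 - b_2, and set X := (<W,fbar> + gamma*KL(fbar|z))/W_min. Then ||log f_gamma - log z||_inf <= log(X) + 2*W_max/gamma + ||log z||_inf. -/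
/-!
STATEMENT 14: `H_γ` bound for flow Sinkhorn: the minimizer `f_γ` of the
entropic Beckmann problem satisfies
`‖log f_γ - log z‖_∞ ≤ log X + 2 W_max / γ + ‖log z‖_∞`, where
`X = (⟨W, f̄⟩ + γ KL(f̄|z)) / W_min` for any feasible flow `f̄`.
-/

noncomputable section

open Real


lemma klterm_nonneg (x y : ℝ) (hx : 0 ≤ x) (hy : 0 < y) :
    0 ≤ x * Real.log (x / y) - x + y := by
  rcases eq_or_lt_of_le hx with h | h
  · simp [← h]; linarith
  · have h1 : Real.log (y / x) ≤ y / x - 1 :=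
      Real.log_le_sub_one_of_pos (div_pos hy h)
    have h2 : Real.log (x / y) = - Real.log (y / x) := by
      rw [← Real.log_inv]; congr 1; field_simp
    have h3 : x * (y / x) = y := by field_simp
    have h4 : x * Real.log (y / x) ≤ x * (y / x - 1) :=
      mul_le_mul_of_nonneg_left h1 hx
    rw [h2]; nlinarith

lemma xlog_split (x y : ℝ) (hx : 0 ≤ x) (hy : 0 < y) :
    x * Real.log (x / y) = x * Real.log x - x * Real.log y := by
  rcases eq_or_lt_of_le hx with h | h
  · simp [← h]
  · rw [Real.log_div (ne_of_gt h) (ne_of_gt hy)]; ring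

lemma mul_log_tangent (x m : ℝ) (hx : 0 ≤ x) (hm : 0 < m) :
    x * Real.log m + x - m ≤ x * Real.log x := by
  have := klterm_nonneg x m hx hm
  rw [xlog_split x m hx hm] at this
  linarith

lemma midpoint_term (a b y : ℝ) (ha : 0 ≤ a) (hb : 0 < b) (hy : 0 < y) :
    ((a + b) / 2) * Real.log ((a + b) / 2 / y) - (a + b) / 2 + y
      ≤ ((a * Real.log (a / y) - a + y) + (b * Real.log (b / y) - b + y)) / 2 := by
  have hm : (0:ℝ) < (a + b) / 2 := by linarith
  rw [xlog_split _ y hm.le hy, xlog_split a y ha hy, xlog_split b y hb.le hy]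
  have t1 := mul_log_tangent a ((a + b) / 2) ha hm
  have t2 := mul_log_tangent b ((a + b) / 2) hb.le hm
  nlinarith [t1, t2]

theorem Hgamma_flow_sinkhorn
    {n : ℕ} (G : SimpleGraph (Fin n)) [DecidableRel G.Adj]
    (hconn : G.Connected)
    (b1 b2 : Fin n → ℝ)
    (hb1 : ∀ i, 0 ≤ b1 i) (hb2 : ∀ i, 0 ≤ b2 i)
    (hb1sum : ∑ i, b1 i = 1) (hb2sum : ∑ i, b2 i = 1)
    -- symmetric edge weights, supported on the edge set
    (W : Fin n → Fin n → ℝ) (hWsymm : ∀ i j, W i j = W j i)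
    (Wmin Wmax : ℝ)
    (hWmin : Wmin = sInf {r : ℝ | ∃ i j, G.Adj i j ∧ r = W i j})
    (hWmax : Wmax = sSup {r : ℝ | ∃ i j, G.Adj i j ∧ r = W i j})
    (hWminpos : 0 < Wmin)
    -- reference z, positive on edges and supported on the edge set
    (z : Fin n → Fin n → ℝ) (γ : ℝ) (hγ : 0 < γ)
    (hz0 : ∀ i j, ¬ G.Adj i j → z i j = 0) (hzpos : ∀ i j, G.Adj i j → 0 < z i j)
    -- KL divergence on flows
    (KL : (Fin n → Fin n → ℝ) → (Fin n → Fin n → ℝ) → ℝ)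
    (hKL : ∀ p q, KL p q = ∑ i, ∑ j, if G.Adj i j then
        (p i j * Real.log (p i j / q i j) - p i j + q i j) else 0)
    -- the minimizer f_γ of the entropic Beckmann problem
    (fγ : Fin n → Fin n → ℝ)
    (hfγ0 : ∀ i j, ¬ G.Adj i j → fγ i j = 0)
    (hfγpos : ∀ i j, G.Adj i j → 0 < fγ i j)
    (hfγfeas : ∀ i, (∑ j, fγ j i) - (∑ j, fγ i j) = b1 i - b2 i)
    (hfγopt : ∀ q : Fin n → Fin n → ℝ,
        (∀ i j, ¬ G.Adj i j → q i j = 0) → (∀ i j, G.Adj i j → 0 < q i j) →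
        (∀ i, (∑ j, q j i) - (∑ j, q i j) = b1 i - b2 i) →
        (∑ i, ∑ j, if G.Adj i j then W i j * fγ i j else 0) + γ * KL fγ z
          ≤ (∑ i, ∑ j, if G.Adj i j then W i j * q i j else 0) + γ * KL q z)
    -- optimality representation via a potential v
    (hpot : ∃ v : Fin n → ℝ, ∀ i j, G.Adj i j →
        fγ i j = z i j * Real.exp ((v i - v j - W i j) / γ))
    -- a feasible flow f̄ and the associated bound X
    (fbar : Fin n → Fin n → ℝ)
    (hfbar0 : ∀ i j, ¬ G.Adj i j → fbar i j = 0)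
    (hfbarpos : ∀ i j, 0 ≤ fbar i j)
    (hfbarfeas : ∀ i, (∑ j, fbar j i) - (∑ j, fbar i j) = b1 i - b2 i)
    (X : ℝ)
    (hX : X = ((∑ i, ∑ j, if G.Adj i j then W i j * fbar i j else 0)
        + γ * KL fbar z) / Wmin) :
    ∀ i j, G.Adj i j →
      |Real.log (fγ i j) - Real.log (z i j)|
        ≤ Real.log X + 2 * Wmax / γ
          + sSup {r : ℝ | ∃ i j, G.Adj i j ∧ r = |Real.log (z i j)|} := by
  obtain ⟨v, hv⟩ := hpot
  -- bounds on W over edges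
  have hSfin : Set.Finite {r : ℝ | ∃ i j, G.Adj i j ∧ r = W i j} := by
    apply Set.Finite.subset (Set.finite_range (fun p : Fin n × Fin n => W p.1 p.2))
    rintro r ⟨i, j, _, rfl⟩; exact ⟨(i, j), rfl⟩
  have hWlb : ∀ i j, G.Adj i j → Wmin ≤ W i j := by
    intro i j h
    rw [hWmin]; exact csInf_le hSfin.bddBelow ⟨i, j, h, rfl⟩
  have hWub : ∀ i j, G.Adj i j → W i j ≤ Wmax := by
    intro i j h
    rw [hWmax]; exact le_csSup hSfin.bddAbove ⟨i, j, h, rfl⟩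
  have hZfin : Set.Finite {r : ℝ | ∃ i j, G.Adj i j ∧ r = |Real.log (z i j)|} := by
    apply Set.Finite.subset (Set.finite_range (fun p : Fin n × Fin n => |Real.log (z p.1 p.2)|))
    rintro r ⟨i, j, _, rfl⟩; exact ⟨(i, j), rfl⟩
  have hZub : ∀ i j, G.Adj i j →
      |Real.log (z i j)| ≤ sSup {r : ℝ | ∃ i j, G.Adj i j ∧ r = |Real.log (z i j)|} := by
    intro i j h
    exact le_csSup hZfin.bddAbove ⟨i, j, h, rfl⟩
  -- Step 1: optimal objective ≤ objective at fbar, via midpoint flow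
  set q : Fin n → Fin n → ℝ := fun i j => (fbar i j + fγ i j) / 2 with hqdef
  have hqval : ∀ i j, q i j = (fbar i j + fγ i j) / 2 := fun i j => rfl
  have hq0 : ∀ i j, ¬ G.Adj i j → q i j = 0 := by
    intro i j h; rw [hqval, hfbar0 i j h, hfγ0 i j h]; norm_num
  have hqpos : ∀ i j, G.Adj i j → 0 < q i j := by
    intro i j h; rw [hqval]
    have := hfbarpos i j; have := hfγpos i j h; linarith
  have hqfeas : ∀ i, (∑ j, q j i) - (∑ j, q i j) = b1 i - b2 i := by
    intro i
    have e1 : ∑ j, q j i = ((∑ j, fbar j i) + (∑ j, fγ j i)) / 2 := by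
      rw [← Finset.sum_add_distrib, ← Finset.sum_div]
    have e2 : ∑ j, q i j = ((∑ j, fbar i j) + (∑ j, fγ i j)) / 2 := by
      rw [← Finset.sum_add_distrib, ← Finset.sum_div]
    rw [e1, e2]
    have := hfbarfeas i; have := hfγfeas i; linarith
  have hopt := hfγopt q hq0 hqpos hqfeas
  have hlin : (∑ i, ∑ j, if G.Adj i j then W i j * q i j else 0)
      = ((∑ i, ∑ j, if G.Adj i j then W i j * fbar i j else 0)
        + (∑ i, ∑ j, if G.Adj i j then W i j * fγ i j else 0)) / 2 := by
    rw [← Finset.sum_add_distrib, Finset.sum_div]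
    apply Finset.sum_congr rfl; intro i _
    rw [← Finset.sum_add_distrib, Finset.sum_div]
    apply Finset.sum_congr rfl; intro j _
    by_cases h : G.Adj i j
    · simp only [if_pos h, hqval]; ring
    · simp [h]
  have hklq : KL q z ≤ (KL fbar z + KL fγ z) / 2 := by
    rw [hKL q z, hKL fbar z, hKL fγ z]
    calc (∑ i, ∑ j, if G.Adj i j then
            (q i j * Real.log (q i j / z i j) - q i j + z i j) else 0)
        ≤ ∑ i, ∑ j, (((if G.Adj i j then
            (fbar i j * Real.log (fbar i j / z i j) - fbar i j + z i j) else 0)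
          + (if G.Adj i j then
            (fγ i j * Real.log (fγ i j / z i j) - fγ i j + z i j) else 0)) / 2) := by
          apply Finset.sum_le_sum; intro i _
          apply Finset.sum_le_sum; intro j _
          by_cases h : G.Adj i j
          · simp only [if_pos h, hqval]
            exact midpoint_term _ _ _ (hfbarpos i j) (hfγpos i j h) (hzpos i j h)
          · simp [h]
      _ = ((∑ i, ∑ j, if G.Adj i j then
            (fbar i j * Real.log (fbar i j / z i j) - fbar i j + z i j) else 0)
          + (∑ i, ∑ j, if G.Adj i j then
            (fγ i j * Real.log (fγ i j / z i j) - fγ i j + z i j) else 0)) / 2 := by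
          rw [← Finset.sum_add_distrib, Finset.sum_div]
          apply Finset.sum_congr rfl; intro i _
          rw [← Finset.sum_add_distrib, Finset.sum_div]
  have hstep1 : (∑ i, ∑ j, if G.Adj i j then W i j * fγ i j else 0) + γ * KL fγ z
      ≤ (∑ i, ∑ j, if G.Adj i j then W i j * fbar i j else 0) + γ * KL fbar z := by
    have h5 : γ * KL q z ≤ γ * ((KL fbar z + KL fγ z) / 2) :=
      mul_le_mul_of_nonneg_left hklq hγ.le
    rw [hlin] at hopt
    nlinarith [hopt, h5]
  -- Step 2: per-edge bound fγ a b ≤ X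
  have hterm_nonneg : ∀ i j, 0 ≤ (if G.Adj i j then W i j * fγ i j else 0) := by
    intro i j; split_ifs with h
    · exact mul_nonneg (le_trans hWminpos.le (hWlb i j h)) (hfγpos i j h).le
    · exact le_refl 0
  have hKLγnn : 0 ≤ KL fγ z := by
    rw [hKL]
    apply Finset.sum_nonneg; intro i _
    apply Finset.sum_nonneg; intro j _
    split_ifs with h
    · exact klterm_nonneg _ _ (hfγpos i j h).le (hzpos i j h)
    · exact le_refl 0
  have hA : (∑ i, ∑ j, if G.Adj i j then W i j * fbar i j else 0) + γ * KL fbar z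
      = Wmin * X := by
    rw [hX]; field_simp
  have hfX : ∀ a b, G.Adj a b → fγ a b ≤ X := by
    intro a b hab
    have h1 : Wmin * fγ a b ≤ (if G.Adj a b then W a b * fγ a b else 0) := by
      rw [if_pos hab]
      exact mul_le_mul_of_nonneg_right (hWlb a b hab) (hfγpos a b hab).le
    have h2 : (if G.Adj a b then W a b * fγ a b else 0)
        ≤ ∑ j, if G.Adj a j then W a j * fγ a j else 0 :=
      Finset.single_le_sum (fun j _ => hterm_nonneg a j) (Finset.mem_univ b)
    have h3 : (∑ j, if G.Adj a j then W a j * fγ a j else 0)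
        ≤ ∑ i, ∑ j, if G.Adj i j then W i j * fγ i j else 0 :=
      Finset.single_le_sum
        (fun i _ => Finset.sum_nonneg fun j _ => hterm_nonneg i j) (Finset.mem_univ a)
    have h4 : Wmin * fγ a b ≤ Wmin * X := by nlinarith [hstep1, hKLγnn, hA]
    exact le_of_mul_le_mul_left h4 hWminpos
  have hlogX : ∀ a b, G.Adj a b → Real.log (fγ a b) ≤ Real.log X := by
    intro a b hab
    exact Real.log_le_log (hfγpos a b hab) (hfX a b hab)
  -- potential relation
  have hlogf : ∀ a b, G.Adj a b →
      Real.log (fγ a b) - Real.log (z a b) = (v a - v b - W a b) / γ := by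
    intro a b hab
    rw [hv a b hab, Real.log_mul (hzpos a b hab).ne' (Real.exp_pos _).ne', Real.log_exp]
    ring
  -- conclusion
  intro i j hij
  set Zs := sSup {r : ℝ | ∃ i j, G.Adj i j ∧ r = |Real.log (z i j)|} with hZs
  have hWmaxpos : 0 < Wmax := lt_of_lt_of_le hWminpos ((hWlb i j hij).trans (hWub i j hij))
  have hWq : (0:ℝ) ≤ 2 * Wmax / γ := by positivity
  have hZnn : 0 ≤ Zs := le_trans (abs_nonneg _) (hZub i j hij)
  rw [abs_le]
  constructor
  · -- lower bound
    have e1 := hlogf i j hij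
    have e2 := hlogf j i hij.symm
    have esum : (Real.log (fγ i j) - Real.log (z i j))
        + (Real.log (fγ j i) - Real.log (z j i)) = -(2 * W i j) / γ := by
      rw [e1, e2, hWsymm j i]; ring
    have hW2 : -(2 * Wmax) / γ ≤ -(2 * W i j) / γ := by
      apply div_le_div_of_nonneg_right ?_ hγ.le
      · linarith [hWub i j hij]
    have hupji : Real.log (fγ j i) - Real.log (z j i) ≤ Real.log X + Zs := by
      have h1 := hlogX j i hij.symm
      have h2 := hZub j i hij.symm
      have h3 := neg_abs_le (Real.log (z j i))
      linarith
    have hneg : -(2 * Wmax) / γ = -(2 * Wmax / γ) := by ring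
    linarith
  · -- upper bound
    have h1 := hlogX i j hij
    have h2 := hZub i j hij
    have h3 := neg_abs_le (Real.log (z i j))
    linarith
end
end

section
/- Decomposition constant bound for W_1 on graphs: for the flow split A_1(f,g) := f*1 - g^T*1, A_2(f,g) := f - g on a connected graph G with edge set E, the decomposition constant satisfies kappa <= 2*diam(E), where diam(E) is the graph diameter (maximum over pairs of vertices of the hop-count shortest-path distance). Concretely: for every nonzero y = (y^{(f)}, y^{(g)}) in range(A^T), there exist vtilde in R^n and Utilde supported on E such that y^{(f)}_{ij} = vtilde_i + Utilde_{ij} and y^{(g)}_{ij} = -vtilde_j - Utilde_{ij} for all (i,j) in E, with ||vtilde||_inf <= 2*diam(E)*||y||_inf. -/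
/-!
STATEMENT 16: Decomposition constant bound for `W₁` on graphs: every nonzero
`y = (y^{(f)}, y^{(g)})` in `range(Aᵀ)` for the flow split admits a
representation `y^{(f)}_{ij} = ṽ_i + Ũ_{ij}`, `y^{(g)}_{ij} = -ṽ_j - Ũ_{ij}`
with `‖ṽ‖_∞ ≤ 2 diam(E) ‖y‖_∞`.
-/

noncomputable section

open Real

theorem kappa_W1_graphs
    {n : ℕ} (G : SimpleGraph (Fin n)) [DecidableRel G.Adj]
    (hconn : G.Connected)
    -- y = (yf, yg) : a pair of edge fields in range(Aᵀ)
    (yf yg : Fin n → Fin n → ℝ)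
    (hyf0 : ∀ i j, ¬ G.Adj i j → yf i j = 0)
    (hyg0 : ∀ i j, ¬ G.Adj i j → yg i j = 0)
    (hynz : ¬ (yf = 0 ∧ yg = 0))
    (hrep : ∃ v : Fin n → ℝ, ∃ U : Fin n → Fin n → ℝ,
        (∀ i j, ¬ G.Adj i j → U i j = 0) ∧
        (∀ i j, G.Adj i j → yf i j = v i + U i j ∧ yg i j = -v j - U i j)) :
    ∃ vt : Fin n → ℝ, ∃ Ut : Fin n → Fin n → ℝ,
      (∀ i j, ¬ G.Adj i j → Ut i j = 0)
      ∧ (∀ i j, G.Adj i j → yf i j = vt i + Ut i j ∧ yg i j = -vt j - Ut i j)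
      ∧ (⨆ i, |vt i|)
          ≤ 2 * (G.diam : ℝ)
            * max (⨆ i, ⨆ j, |yf i j|) (⨆ i, ⨆ j, |yg i j|) := by
  obtain ⟨v, U, hU0, hvU⟩ := hrep
  rcases Nat.eq_zero_or_pos n with hn | hn
  · subst hn
    exact absurd ⟨funext fun i => i.elim0, funext fun i => i.elim0⟩ hynz
  haveI : Nonempty (Fin n) := ⟨⟨0, hn⟩⟩
  set M : ℝ := max (⨆ i, ⨆ j, |yf i j|) (⨆ i, ⨆ j, |yg i j|) with hMdef
  have hbdd : ∀ z : Fin n → Fin n → ℝ, ∀ i j, |z i j| ≤ ⨆ i, ⨆ j, |z i j| := by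
    intro z i j
    calc |z i j| ≤ ⨆ j, |z i j| :=
          le_ciSup (Set.Finite.bddAbove (Set.finite_range fun j => |z i j|)) j
      _ ≤ ⨆ i, ⨆ j, |z i j| :=
          le_ciSup (f := fun i => ⨆ j, |z i j|)
            (Set.Finite.bddAbove (Set.finite_range fun i => ⨆ j, |z i j|)) i
  have hMf : ∀ i j, |yf i j| ≤ M := fun i j =>
    le_trans (hbdd yf i j) (le_max_left _ _)
  have hMg : ∀ i j, |yg i j| ≤ M := fun i j =>
    le_trans (hbdd yg i j) (le_max_right _ _)
  have hM0 : 0 ≤ M := le_trans (abs_nonneg _) (hMf Classical.ofNonempty Classical.ofNonempty)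
  -- edge bound
  have hedge : ∀ a b, G.Adj a b → |v a - v b| ≤ 2 * M := by
    intro a b hab
    obtain ⟨h1, h2⟩ := hvU a b hab
    have : v a - v b = yf a b + yg a b := by rw [h1, h2]; ring
    rw [this]
    calc |yf a b + yg a b| ≤ |yf a b| + |yg a b| := abs_add_le _ _
      _ ≤ M + M := add_le_add (hMf a b) (hMg a b)
      _ = 2 * M := by ring
  -- walk bound
  have hwalk : ∀ a b : Fin n, ∀ p : G.Walk a b, |v a - v b| ≤ p.length * (2 * M) := by
    intro a b p
    induction p with
    | nil => simp
    | @cons a c b hac q ih =>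
      calc |v a - v b| ≤ |v a - v c| + |v c - v b| := abs_sub_le _ _ _
        _ ≤ 2 * M + q.length * (2 * M) := add_le_add (hedge a c hac) ih
        _ = (q.cons hac).length * (2 * M) := by
            rw [SimpleGraph.Walk.length_cons]; push_cast; ring
  obtain ⟨i0⟩ := (inferInstance : Nonempty (Fin n))
  have hediam : G.ediam ≠ ⊤ := by
    obtain ⟨u, w, huw⟩ := G.exists_edist_eq_ediam_of_finite
    rw [← huw]
    exact SimpleGraph.edist_ne_top_iff_reachable.mpr (hconn u w)
  have hdistdiam : ∀ i : Fin n, (G.dist i i0 : ℝ) ≤ (G.diam : ℝ) := by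
    intro i
    exact_mod_cast G.dist_le_diam hediam
  have hv : ∀ i : Fin n, |v i - v i0| ≤ 2 * (G.diam : ℝ) * M := by
    intro i
    obtain ⟨p, hp⟩ := (hconn i i0).exists_walk_length_eq_dist
    calc |v i - v i0| ≤ p.length * (2 * M) := hwalk i i0 p
      _ = (G.dist i i0 : ℝ) * (2 * M) := by rw [hp]
      _ ≤ (G.diam : ℝ) * (2 * M) := by
          apply mul_le_mul_of_nonneg_right (hdistdiam i) (by positivity)
      _ = 2 * (G.diam : ℝ) * M := by ring
  refine ⟨fun i => v i - v i0,
    fun i j => if G.Adj i j then U i j + v i0 else 0, ?_, ?_, ?_⟩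
  · intro i j h; simp [h]
  · intro i j h
    obtain ⟨h1, h2⟩ := hvU i j h
    constructor
    · simp only [h, if_true, h1]; ring
    · simp only [h, if_true, h2]; ring
  · exact ciSup_le fun i => hv i
end
end

section
/- Monotone, translation-equivariant maps are non-expansive in the variation seminorm: let T: R^n -> R^n satisfy (1) monotonicity (x <= y coordinatewise implies T(x) <= T(y) coordinatewise) and (2) translation-equivariance (T(x + c*1) = T(x) + c*1 for all x in R^n and c in R). Then for all x, y in R^n, |T(x) - T(y)|_Var <= |x - y|_Var. -/
/-!
STATEMENT 17: Monotone, translation-equivariant maps are non-expansive in the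
variation seminorm `|v|_Var = (max v - min v)/2`.
-/

noncomputable section

theorem monotone_translation_equivariant_nonexpansive
    {n : ℕ} (T : (Fin n → ℝ) → (Fin n → ℝ))
    (hmono : ∀ x y : Fin n → ℝ, (∀ i, x i ≤ y i) → ∀ i, T x i ≤ T y i)
    (htrans : ∀ (x : Fin n → ℝ) (c : ℝ), T (fun i => x i + c) = fun i => T x i + c) :
    ∀ x y : Fin n → ℝ,
      ((⨆ i, (T x i - T y i)) - ⨅ i, (T x i - T y i)) / 2
        ≤ ((⨆ i, (x i - y i)) - ⨅ i, (x i - y i)) / 2 := by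
  intro x y
  rcases Nat.eq_zero_or_pos n with hn | hn
  · subst hn
    simp [Real.iSup_of_isEmpty, Real.iInf_of_isEmpty]
  · haveI : Nonempty (Fin n) := ⟨⟨0, hn⟩⟩
    set M := ⨆ i, (x i - y i) with hM
    set m := ⨅ i, (x i - y i) with hm
    have hbddS : BddAbove (Set.range fun i => x i - y i) := Set.Finite.bddAbove (Set.finite_range _)
    have hbddI : BddBelow (Set.range fun i => x i - y i) := Set.Finite.bddBelow (Set.finite_range _)
    have hxle : ∀ i, x i ≤ y i + M := by
      intro i
      have := le_ciSup hbddS i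
      linarith
    have hxge : ∀ i, y i + m ≤ x i := by
      intro i
      have := ciInf_le hbddI i
      linarith
    have h1 : ∀ i, T x i ≤ T y i + M := by
      intro i
      have := hmono x (fun i => y i + M) hxle i
      rw [htrans y M] at this
      exact this
    have h2 : ∀ i, T y i + m ≤ T x i := by
      intro i
      have := hmono (fun i => y i + m) x hxge i
      rw [htrans y m] at this
      exact this
    have hS : (⨆ i, (T x i - T y i)) ≤ M := by
      apply ciSup_le
      intro i
      have := h1 i
      linarith
    have hI : m ≤ ⨅ i, (T x i - T y i) := by
      apply le_ciInf
      intro i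
      have := h2 i
      linarith
    linarith
end
end

section
/- Translation equivariance under signed paired-balance: fix tau in {+1, -1} and assume A_1^T 1_{m_1} + tau * A_2^T 1_{m_2} = 0 in R^d. Then for every c in R: Psi_2(u_1 + c*1_{m_1}) = Psi_2(u_1) + tau*c*1_{m_2} and Psi_1(u_2 + c*1_{m_2}) = Psi_1(u_2) + tau*c*1_{m_1}. Consequently, the full sweep Psi := Psi_1 ∘ Psi_2 : R^{m_1} -> R^{m_1} is translation-equivariant: Psi(u_1 + c*1_{m_1}) = Psi(u_1) + c*1_{m_1}. -/
/-!
STATEMENT 19: Translation equivariance under signed paired-balance: if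
`A₁ᵀ 1 + τ A₂ᵀ 1 = 0` with `τ ∈ {±1}`, then `Ψ₂(u₁ + c·1) = Ψ₂(u₁) + τc·1`,
`Ψ₁(u₂ + c·1) = Ψ₁(u₂) + τc·1`, and the sweep `Ψ = Ψ₁ ∘ Ψ₂` is
translation-equivariant.
-/

noncomputable section

open Real

theorem translation_equivariance_paired_balance
    {d m1 m2 : ℕ}
    (A1 : Matrix (Fin m1) (Fin d) ℝ) (A2 : Matrix (Fin m2) (Fin d) ℝ)
    (b1 : Fin m1 → ℝ) (b2 : Fin m2 → ℝ) (C z : Fin d → ℝ) (γ : ℝ)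
    (hz : ∀ i, 0 < z i) (hγ : 0 < γ)
    -- signed paired-balance condition
    (τ : ℝ) (hτ : τ = 1 ∨ τ = -1)
    (hbal : ∀ i : Fin d, (∑ j, A1 j i) + τ * (∑ j, A2 j i) = 0)
    -- dual objective
    (F : (Fin m1 → ℝ) → (Fin m2 → ℝ) → ℝ)
    (hF : ∀ u1 u2, F u1 u2
        = (∑ i, b1 i * u1 i) + (∑ i, b2 i * u2 i) + γ * (∑ i, z i)
          - γ * ∑ i, z i * Real.exp
              (((∑ j, u1 j * A1 j i) + (∑ j, u2 j * A2 j i) - C i) / γ))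
    -- well-defined block maximization maps Ψ₁ and Ψ₂
    (Psi1 : (Fin m2 → ℝ) → Fin m1 → ℝ) (Psi2 : (Fin m1 → ℝ) → Fin m2 → ℝ)
    (hPsi1max : ∀ u2 w, F w u2 ≤ F (Psi1 u2) u2)
    (hPsi1uniq : ∀ u2 w, (∀ w', F w' u2 ≤ F w u2) → w = Psi1 u2)
    (hPsi2max : ∀ u1 w, F u1 w ≤ F u1 (Psi2 u1))
    (hPsi2uniq : ∀ u1 w, (∀ w', F u1 w' ≤ F u1 w) → w = Psi2 u1) :
    ∀ c : ℝ,
      (∀ u1 : Fin m1 → ℝ,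
          Psi2 (fun i => u1 i + c) = fun j => Psi2 u1 j + τ * c)
      ∧ (∀ u2 : Fin m2 → ℝ,
          Psi1 (fun j => u2 j + c) = fun i => Psi1 u2 i + τ * c)
      ∧ (∀ u1 : Fin m1 → ℝ,
          Psi1 (Psi2 (fun i => u1 i + c)) = fun i => Psi1 (Psi2 u1) i + c) := by

  -- key invariance of F under the paired shift
  have key : ∀ (u1 : Fin m1 → ℝ) (u2 : Fin m2 → ℝ) (c : ℝ),
      F (fun i => u1 i + c) (fun j => u2 j + τ * c)
        = F u1 u2 + c * (∑ i, b1 i) + τ * c * (∑ i, b2 i) := by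
    intro u1 u2 c
    rw [hF, hF]
    have hexp : ∀ i : Fin d,
        (∑ j, (u1 j + c) * A1 j i) + (∑ j, (u2 j + τ * c) * A2 j i)
          = (∑ j, u1 j * A1 j i) + (∑ j, u2 j * A2 j i) := by
      intro i
      have h1 : ∑ j, (u1 j + c) * A1 j i
          = (∑ j, u1 j * A1 j i) + c * ∑ j, A1 j i := by
        rw [Finset.mul_sum, ← Finset.sum_add_distrib]
        exact Finset.sum_congr rfl (fun j _ => by ring)
      have h2 : ∑ j, (u2 j + τ * c) * A2 j i
          = (∑ j, u2 j * A2 j i) + τ * c * ∑ j, A2 j i := by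
        rw [Finset.mul_sum, ← Finset.sum_add_distrib]
        exact Finset.sum_congr rfl (fun j _ => by ring)
      rw [h1, h2]
      linear_combination c * hbal i
    have hsum : (∑ i, z i * Real.exp
        (((∑ j, (u1 j + c) * A1 j i) + (∑ j, (u2 j + τ * c) * A2 j i) - C i) / γ))
        = ∑ i, z i * Real.exp
        (((∑ j, u1 j * A1 j i) + (∑ j, u2 j * A2 j i) - C i) / γ) :=
      Finset.sum_congr rfl (fun i _ => by rw [hexp i])
    have hb1 : ∑ i, b1 i * (u1 i + c) = (∑ i, b1 i * u1 i) + c * ∑ i, b1 i := by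
      rw [Finset.mul_sum, ← Finset.sum_add_distrib]
      exact Finset.sum_congr rfl (fun i _ => by ring)
    have hb2 : ∑ i, b2 i * (u2 i + τ * c)
        = (∑ i, b2 i * u2 i) + τ * c * ∑ i, b2 i := by
      rw [Finset.mul_sum, ← Finset.sum_add_distrib]
      exact Finset.sum_congr rfl (fun i _ => by ring)
    rw [hsum, hb1, hb2]
    ring
  have hτ2 : τ * τ = 1 := by rcases hτ with h | h <;> rw [h] <;> norm_num
  have step2 : ∀ (c : ℝ) (u1 : Fin m1 → ℝ),
      Psi2 (fun i => u1 i + c) = fun j => Psi2 u1 j + τ * c := by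
    intro c u1
    refine (hPsi2uniq _ _ ?_).symm
    intro w'
    have hw' : (fun j => (w' j - τ * c) + τ * c) = w' := by
      funext j; ring
    calc F (fun i => u1 i + c) w'
        = F (fun i => u1 i + c) (fun j => (w' j - τ * c) + τ * c) := by rw [hw']
      _ = F u1 (fun j => w' j - τ * c) + c * (∑ i, b1 i) + τ * c * (∑ i, b2 i) :=
          key u1 _ c
      _ ≤ F u1 (Psi2 u1) + c * (∑ i, b1 i) + τ * c * (∑ i, b2 i) := by
          have := hPsi2max u1 (fun j => w' j - τ * c); linarith
      _ = F (fun i => u1 i + c) (fun j => Psi2 u1 j + τ * c) := (key u1 _ c).symm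
  have step1 : ∀ (c : ℝ) (u2 : Fin m2 → ℝ),
      Psi1 (fun j => u2 j + c) = fun i => Psi1 u2 i + τ * c := by
    intro c u2
    refine (hPsi1uniq _ _ ?_).symm
    intro w'
    have hw' : (fun i => (w' i - τ * c) + τ * c) = w' := by
      funext i; ring
    have hc : τ * (τ * c) = c := by rw [← mul_assoc, hτ2, one_mul]
    have hu2 : (fun j => u2 j + τ * (τ * c)) = fun j => u2 j + c := by
      funext j; rw [hc]
    calc F w' (fun j => u2 j + c)
        = F (fun i => (w' i - τ * c) + τ * c) (fun j => u2 j + τ * (τ * c)) := by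
          rw [hw', hu2]
      _ = F (fun i => w' i - τ * c) u2 + (τ * c) * (∑ i, b1 i)
            + τ * (τ * c) * (∑ i, b2 i) := key _ u2 (τ * c)
      _ ≤ F (Psi1 u2) u2 + (τ * c) * (∑ i, b1 i) + τ * (τ * c) * (∑ i, b2 i) := by
          have := hPsi1max u2 (fun i => w' i - τ * c); linarith
      _ = F (fun i => Psi1 u2 i + τ * c) (fun j => u2 j + τ * (τ * c)) :=
          (key _ u2 (τ * c)).symm
      _ = F (fun i => Psi1 u2 i + τ * c) (fun j => u2 j + c) := by rw [hu2]
  intro c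
  refine ⟨step2 c, step1 c, ?_⟩
  intro u1
  rw [step2 c u1, step1 (τ * c) (Psi2 u1)]
  funext i
  rw [← mul_assoc, hτ2, one_mul]
end
end
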